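/- arXiv:2108.00451 — 11 statements merged into one kernel-verified Lean document; each statement's English description precedes it below -/
import Mathlib

section
/- For every β > 1 and every n ≥ 1, the number N_n(β) of words in the language L_n(X_β) of the β-shift satisfies β^n ≤ N_n(β) ≤ (β/(β−1))·β^n. -/
/-!
Reals in `[0, 1)` with the same word of length `n` differ by less than `β⁻ⁿ`, since
`r = ∑ uᵢ β^-(i+1) + T_βⁿ r / βⁿ`; so the points `k / βⁿ`, `k < ⌈βⁿ⌉`, have distinct words and
`βⁿ ≤ N_n`.

The value `∑ uᵢ β^-(i+1)` of a word `u` is the left end point of its cylinder, and a cylinder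
contains every point between its left end point and any of its members. Hence the values of the
distinct words of length `n + 1` with non-zero last letter are `β^-(n+1)`-separated points of
`[β^-(n+1), 1)`, so there are fewer than `β^(n+1)` of them, while a word with last letter `0` is
determined by its prefix. Thus `N_{n+1} ≤ N_n + β^(n+1)`, and
`N_n ≤ 1 + β + ⋯ + βⁿ ≤ β^(n+1) / (β - 1)`.
-/

/-- The β-transformation `T_β(x) = βx - ⌊βx⌋`. -/
noncomputable def betaMap (β : ℝ) (x : ℝ) : ℝ := β * x - ⌊β * x⌋

/-- The language `L_n(X_β)` of the β-shift: words arising from β-expansions of reals in `[0,1)`. -/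
def betaLang (β : ℝ) (n : ℕ) : Set (Fin n → ℤ) :=
  {u | ∃ r : ℝ, 0 ≤ r ∧ r < 1 ∧ ∀ i : Fin n, u i = ⌊β * (betaMap β)^[(i : ℕ)] r⌋}


open Set

namespace BetaShift

lemma ncard_le_ceil_of_pairwise_one_le_abs_sub {α : Type*} {s : Set α} (f : α → ℝ) {x : ℝ}
    (hf : ∀ a ∈ s, f a ∈ Ico 0 x) (hsep : s.Pairwise fun a b => 1 ≤ |f a - f b|) :
    s.ncard ≤ ⌈x⌉₊ := by
  calc s.ncard ≤ (Finset.range ⌈x⌉₊ : Set ℕ).ncard := by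
        refine ncard_le_ncard_of_injOn (fun a => ⌊f a⌋₊) (fun a ha => ?_) (fun a ha b hb hab => ?_)
          (Finset.finite_toSet _)
        · simpa [Nat.floor_lt (hf a ha).1] using (hf a ha).2.trans_le (Nat.le_ceil x)
        · by_contra hne
          refine (hsep ha hb hne).not_gt (Int.abs_sub_lt_one_of_floor_eq_floor ?_)
          rw [← Int.natCast_floor_eq_floor (hf a ha).1, ← Int.natCast_floor_eq_floor (hf b hb).1]
          exact congrArg _ hab
    _ = ⌈x⌉₊ := by simp

variable {β : ℝ}

noncomputable def betaWord (β : ℝ) (n : ℕ) (r : ℝ) : Fin n → ℤ :=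
  fun i => ⌊β * (betaMap β)^[(i : ℕ)] r⌋

noncomputable def wordValue (β : ℝ) {n : ℕ} (u : Fin n → ℤ) : ℝ :=
  ∑ i : Fin n, (u i : ℝ) / β ^ ((i : ℕ) + 1)

lemma betaMap_mem_Ico (x : ℝ) : betaMap β x ∈ Ico 0 1 :=
  ⟨Int.fract_nonneg _, Int.fract_lt_one _⟩

lemma iterate_betaMap_mem_Ico {r : ℝ} (hr : r ∈ Ico 0 1) (n : ℕ) :
    (betaMap β)^[n] r ∈ Ico 0 1 := by
  cases n with
  | zero => exact hr
  | succ n => rw [Function.iterate_succ_apply']; exact betaMap_mem_Ico _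

lemma floor_mul_mem_Icc (hβ : 0 ≤ β) {x : ℝ} (hx : x ∈ Ico 0 1) : ⌊β * x⌋ ∈ Icc 0 ⌊β⌋ :=
  ⟨Int.floor_nonneg.2 (mul_nonneg hβ hx.1),
    Int.floor_le_floor (mul_le_of_le_one_right hβ hx.2.le)⟩

lemma mem_betaLang_iff {n : ℕ} {u : Fin n → ℤ} :
    u ∈ betaLang β n ↔ ∃ r ∈ Ico (0 : ℝ) 1, betaWord β n r = u := by
  constructor
  · rintro ⟨r, h0, h1, hu⟩
    exact ⟨r, ⟨h0, h1⟩, funext fun i => (hu i).symm⟩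
  · rintro ⟨r, ⟨h0, h1⟩, rfl⟩
    exact ⟨r, h0, h1, fun _ => rfl⟩

lemma betaWord_mem_betaLang {n : ℕ} {r : ℝ} (hr : r ∈ Ico 0 1) : betaWord β n r ∈ betaLang β n :=
  mem_betaLang_iff.2 ⟨r, hr, rfl⟩

lemma nonneg_of_mem_betaLang (hβ : 0 ≤ β) {n : ℕ} {u : Fin n → ℤ} (hu : u ∈ betaLang β n)
    (i : Fin n) : 0 ≤ u i := by
  obtain ⟨r, hr, rfl⟩ := mem_betaLang_iff.1 hu
  exact (floor_mul_mem_Icc hβ (iterate_betaMap_mem_Ico hr i)).1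

lemma init_mem_betaLang {n : ℕ} {u : Fin (n + 1) → ℤ} (hu : u ∈ betaLang β (n + 1)) :
    Fin.init u ∈ betaLang β n := by
  obtain ⟨r, hr, rfl⟩ := mem_betaLang_iff.1 hu
  exact betaWord_mem_betaLang hr

lemma betaLang_finite (hβ : 0 ≤ β) (n : ℕ) : (betaLang β n).Finite := by
  refine (Set.Finite.pi fun _ => Set.finite_Icc (0 : ℤ) ⌊β⌋).subset ?_
  rintro _ hu i -
  obtain ⟨r, hr, rfl⟩ := mem_betaLang_iff.1 hu
  exact floor_mul_mem_Icc hβ (iterate_betaMap_mem_Ico hr i)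

lemma betaWord_succ (n : ℕ) (r : ℝ) :
    betaWord β (n + 1) r = Fin.cons ⌊β * r⌋ (betaWord β n (betaMap β r)) := by
  ext i
  cases i using Fin.cases <;> rfl

lemma wordValue_cons {n : ℕ} (a : ℤ) (u : Fin n → ℤ) :
    wordValue β (Fin.cons a u : Fin (n + 1) → ℤ) = (a + wordValue β u) / β := by
  simp only [wordValue, Fin.sum_univ_succ, Fin.cons_zero, Fin.cons_succ, Fin.val_zero,
    Fin.val_succ, add_div, Finset.sum_div, pow_succ, div_div]
  simp

lemma wordValue_snoc {n : ℕ} (u : Fin n → ℤ) (a : ℤ) :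
    wordValue β (Fin.snoc u a : Fin (n + 1) → ℤ) = wordValue β u + a / β ^ (n + 1) := by
  simp [wordValue, Fin.sum_univ_castSucc]

lemma wordValue_nonneg (hβ : 0 ≤ β) {n : ℕ} {u : Fin n → ℤ} (hu : ∀ i, 0 ≤ u i) :
    0 ≤ wordValue β u :=
  Finset.sum_nonneg fun i _ => div_nonneg (by exact_mod_cast hu i) (by positivity)

lemma eq_wordValue_add (hβ : β ≠ 0) (n : ℕ) (r : ℝ) :
    r = wordValue β (betaWord β n r) + (betaMap β)^[n] r / β ^ n := by
  induction n generalizing r with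
  | zero => simp [wordValue]
  | succ n ih =>
    rw [betaWord_succ, wordValue_cons, Function.iterate_succ_apply]
    have hT : betaMap β r = β * r - ⌊β * r⌋ := rfl
    rw [eq_sub_of_add_eq (ih (betaMap β r)).symm, hT]
    field_simp
    ring

lemma abs_sub_lt_of_betaWord_eq (hβ : 0 < β) {n : ℕ} {r r' : ℝ} (hr : r ∈ Ico 0 1)
    (hr' : r' ∈ Ico 0 1) (h : betaWord β n r = betaWord β n r') : |r - r'| < 1 / β ^ n := by
  have hT := iterate_betaMap_mem_Ico (β := β) hr n
  have hT' := iterate_betaMap_mem_Ico (β := β) hr' n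
  have e := eq_wordValue_add hβ.ne' n r
  have e' := eq_wordValue_add hβ.ne' n r'
  rw [h] at e
  have hdiff : r - r' = ((betaMap β)^[n] r - (betaMap β)^[n] r') / β ^ n := by
    rw [sub_div]; linarith
  rw [hdiff, abs_div, abs_of_pos (pow_pos hβ n)]
  gcongr
  exact abs_sub_lt_iff.2 ⟨by linarith [hT.2, hT'.1], by linarith [hT.1, hT'.2]⟩

lemma pow_le_ncard_betaLang (hβ : 1 < β) (n : ℕ) : β ^ n ≤ (betaLang β n).ncard := by
  have hβn : 0 < β ^ n := pow_pos (by linarith) n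
  have hmem : ∀ k ∈ (Finset.range ⌈β ^ n⌉₊ : Set ℕ), (k : ℝ) / β ^ n ∈ Ico 0 1 := fun k hk =>
    ⟨by positivity, (div_lt_one hβn).2 (Nat.lt_ceil.1 (by simpa using hk))⟩
  have hcard : ⌈β ^ n⌉₊ ≤ (betaLang β n).ncard := by
    calc ⌈β ^ n⌉₊ = (Finset.range ⌈β ^ n⌉₊ : Set ℕ).ncard := by simp
      _ ≤ _ := by
        refine ncard_le_ncard_of_injOn (fun k => betaWord β n ((k : ℝ) / β ^ n))
          (fun k hk => betaWord_mem_betaLang (hmem k hk)) (fun k hk k' hk' h => ?_)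
          (betaLang_finite (by linarith) n)
        have := abs_sub_lt_of_betaWord_eq (by linarith) (hmem k hk) (hmem k' hk') h
        rw [← sub_div, abs_div, abs_of_pos hβn, div_lt_div_iff_of_pos_right hβn] at this
        obtain ⟨h₁, h₂⟩ := abs_sub_lt_iff.1 this
        have : k < k' + 1 := by exact_mod_cast (by linarith : (k : ℝ) < k' + 1)
        have : k' < k + 1 := by exact_mod_cast (by linarith : (k' : ℝ) < k + 1)
        omega
  exact (Nat.le_ceil _).trans (by exact_mod_cast hcard)

lemma wordValue_betaWord_le (hβ : 0 < β) {r : ℝ} (hr : r ∈ Ico 0 1) (n : ℕ) :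
    wordValue β (betaWord β n r) ≤ r := by
  have e := eq_wordValue_add hβ.ne' n r
  have := div_nonneg (iterate_betaMap_mem_Ico (β := β) hr n).1 (pow_pos hβ n).le
  linarith

lemma wordValue_betaWord_nonneg (hβ : 0 ≤ β) {r : ℝ} (hr : r ∈ Ico 0 1) (n : ℕ) :
    0 ≤ wordValue β (betaWord β n r) :=
  wordValue_nonneg hβ fun i => (floor_mul_mem_Icc hβ (iterate_betaMap_mem_Ico hr i)).1

lemma betaWord_eq_of_mem_Icc (hβ : 0 < β) {n : ℕ} {r t : ℝ} (hr : r ∈ Ico 0 1)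
    (ht : t ∈ Icc (wordValue β (betaWord β n r)) r) : betaWord β n t = betaWord β n r := by
  induction n generalizing r t with
  | zero => exact Subsingleton.elim _ _
  | succ n ih =>
    obtain ⟨hlo, hhi⟩ := ht
    rw [betaWord_succ, wordValue_cons, div_le_iff₀' hβ] at hlo
    have hv := wordValue_betaWord_nonneg hβ.le (betaMap_mem_Ico (β := β) r) n
    have hβt : β * t ≤ β * r := mul_le_mul_of_nonneg_left hhi hβ.le
    have hd : ⌊β * t⌋ = ⌊β * r⌋ :=
      le_antisymm (Int.floor_mono hβt) (Int.le_floor.2 (by linarith))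
    have hTt : betaMap β t ∈ Icc (wordValue β (betaWord β n (betaMap β r))) (betaMap β r) := by
      simp only [betaMap, hd] at hlo ⊢
      constructor <;> linarith
    rw [betaWord_succ, betaWord_succ, hd, ih (betaMap_mem_Ico r) hTt]

lemma wordValue_mem_Ico (hβ : 0 < β) {n : ℕ} {u : Fin n → ℤ} (hu : u ∈ betaLang β n) :
    wordValue β u ∈ Ico 0 1 := by
  obtain ⟨r, hr, rfl⟩ := mem_betaLang_iff.1 hu
  exact ⟨wordValue_betaWord_nonneg hβ.le hr n, (wordValue_betaWord_le hβ hr n).trans_lt hr.2⟩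

lemma betaWord_wordValue (hβ : 0 < β) {n : ℕ} {u : Fin n → ℤ} (hu : u ∈ betaLang β n) :
    betaWord β n (wordValue β u) = u := by
  obtain ⟨r, hr, rfl⟩ := mem_betaLang_iff.1 hu
  exact betaWord_eq_of_mem_Icc hβ hr ⟨le_rfl, wordValue_betaWord_le hβ hr n⟩

lemma init_betaWord (n : ℕ) (r : ℝ) : Fin.init (betaWord β (n + 1) r) = betaWord β n r := rfl

lemma betaWord_wordValue_init (hβ : 0 < β) {n : ℕ} {u : Fin (n + 1) → ℤ}
    (hu : u ∈ betaLang β (n + 1)) : betaWord β n (wordValue β u) = Fin.init u := by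
  rw [← init_betaWord, betaWord_wordValue hβ hu]

lemma wordValue_eq_init_add_last {n : ℕ} (u : Fin (n + 1) → ℤ) :
    wordValue β u = wordValue β (Fin.init u) + u (Fin.last n) / β ^ (n + 1) := by
  rw [← wordValue_snoc, Fin.snoc_init_self]

lemma eq_of_wordValue_le_of_lt (hβ : 0 < β) {n : ℕ} {u v : Fin (n + 1) → ℤ}
    (hu : u ∈ betaLang β (n + 1)) (hv : v ∈ betaLang β (n + 1)) (hv_last : 1 ≤ v (Fin.last n))
    (hle : wordValue β u ≤ wordValue β v)
    (hlt : wordValue β v < wordValue β u + 1 / β ^ (n + 1)) : u = v := by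
  have hβn : 0 < β ^ (n + 1) := pow_pos hβ _
  have hp := wordValue_eq_init_add_last (β := β) u
  have hq := wordValue_eq_init_add_last (β := β) v
  -- Otherwise the value of `u` would lie in the cylinder of `Fin.init v`, between its left end
  -- point and the value of `v`.
  have hinit : Fin.init u = Fin.init v := by
    have hgap : 1 / β ^ (n + 1) ≤ v (Fin.last n) / β ^ (n + 1) := by gcongr; exact_mod_cast hv_last
    have key : betaWord β n (wordValue β u) = betaWord β n (wordValue β v) := by
      refine betaWord_eq_of_mem_Icc hβ (wordValue_mem_Ico hβ hv) ⟨?_, hle⟩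
      rw [betaWord_wordValue_init hβ hv]
      linarith
    rwa [betaWord_wordValue_init hβ hu, betaWord_wordValue_init hβ hv] at key
  have hlast : u (Fin.last n) = v (Fin.last n) := by
    rw [hinit] at hp
    have h0 : (u (Fin.last n) : ℝ) ≤ v (Fin.last n) := by
      rw [hp, hq] at hle; simpa [div_le_div_iff_of_pos_right hβn] using hle
    have h1 : (v (Fin.last n) : ℝ) < u (Fin.last n) + 1 := by
      rw [hp, hq] at hlt
      rw [← div_lt_div_iff_of_pos_right hβn, add_div]
      linarith
    have h0' : u (Fin.last n) ≤ v (Fin.last n) := by exact_mod_cast h0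
    have h1' : v (Fin.last n) < u (Fin.last n) + 1 := by exact_mod_cast h1
    omega
  rw [← Fin.snoc_init_self u, ← Fin.snoc_init_self v, hinit, hlast]

lemma one_div_pow_le_abs_wordValue_sub (hβ : 0 < β) {n : ℕ} {u v : Fin (n + 1) → ℤ}
    (hu : u ∈ betaLang β (n + 1)) (hv : v ∈ betaLang β (n + 1)) (hu_last : u (Fin.last n) ≠ 0)
    (hv_last : v (Fin.last n) ≠ 0) (hne : u ≠ v) :
    1 / β ^ (n + 1) ≤ |wordValue β u - wordValue β v| := by
  have hpos : ∀ w ∈ betaLang β (n + 1), w (Fin.last n) ≠ 0 → 1 ≤ w (Fin.last n) :=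
    fun w hw hw_last => by have := nonneg_of_mem_betaLang hβ.le hw (Fin.last n); omega
  rcases le_total (wordValue β u) (wordValue β v) with h | h
  · rw [abs_sub_comm, abs_of_nonneg (sub_nonneg.2 h)]
    by_contra! hlt
    exact hne (eq_of_wordValue_le_of_lt hβ hu hv (hpos v hv hv_last) h (by linarith))
  · rw [abs_of_nonneg (sub_nonneg.2 h)]
    by_contra! hlt
    exact hne (eq_of_wordValue_le_of_lt hβ hv hu (hpos u hu hu_last) h (by linarith)).symm

lemma ncard_last_ne_zero_lt (hβ : 1 < β) (n : ℕ) :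
    ({u ∈ betaLang β (n + 1) | u (Fin.last n) ≠ 0}.ncard : ℝ) < β ^ (n + 1) := by
  have hβ0 : 0 < β := by linarith
  have hβn : 0 < β ^ (n + 1) := pow_pos hβ0 _
  have h1 : 1 ≤ β ^ (n + 1) := one_le_pow₀ hβ.le
  have hcount := ncard_le_ceil_of_pairwise_one_le_abs_sub
    (s := {u ∈ betaLang β (n + 1) | u (Fin.last n) ≠ 0})
    (fun u => β ^ (n + 1) * wordValue β u - 1) (x := β ^ (n + 1) - 1) ?_ ?_
  · calc _ ≤ (⌈β ^ (n + 1) - 1⌉₊ : ℝ) := by exact_mod_cast hcount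
      _ < β ^ (n + 1) := by linarith [Nat.ceil_lt_add_one (by linarith : 0 ≤ β ^ (n + 1) - 1)]
  · rintro u ⟨hu, hu_last⟩
    have hlast : (1 : ℝ) ≤ u (Fin.last n) := by
      have := nonneg_of_mem_betaLang hβ0.le hu (Fin.last n)
      exact_mod_cast (by omega : 1 ≤ u (Fin.last n))
    have hinit := wordValue_nonneg hβ0.le (nonneg_of_mem_betaLang hβ0.le (init_mem_betaLang hu))
    have hlt := (wordValue_mem_Ico hβ0 hu).2
    rw [wordValue_eq_init_add_last] at hlt ⊢
    constructor
    · rw [mul_add, mul_div_cancel₀ _ hβn.ne']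
      nlinarith
    · nlinarith
  · rintro u ⟨hu, hu_last⟩ v ⟨hv, hv_last⟩ hne
    have := one_div_pow_le_abs_wordValue_sub hβ0 hu hv hu_last hv_last hne
    rw [show β ^ (n + 1) * wordValue β u - 1 - (β ^ (n + 1) * wordValue β v - 1)
      = β ^ (n + 1) * (wordValue β u - wordValue β v) by ring, abs_mul, abs_of_pos hβn]
    rwa [div_le_iff₀' hβn] at this

lemma ncard_betaLang_succ_le (hβ : 1 < β) (n : ℕ) :
    ((betaLang β (n + 1)).ncard : ℝ) ≤ (betaLang β n).ncard + β ^ (n + 1) := by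
  set L := betaLang β (n + 1)
  have hsplit : L = {u ∈ L | u (Fin.last n) = 0} ∪ {u ∈ L | u (Fin.last n) ≠ 0} := by
    ext u; simp only [mem_union, mem_sep_iff]; tauto
  have hzero : {u ∈ L | u (Fin.last n) = 0}.ncard ≤ (betaLang β n).ncard := by
    refine ncard_le_ncard_of_injOn Fin.init (fun u hu => init_mem_betaLang hu.1)
      (fun u hu v hv h => ?_) (betaLang_finite (by linarith) n)
    rw [← Fin.snoc_init_self u, ← Fin.snoc_init_self v, h, hu.2, hv.2]
  calc (L.ncard : ℝ)
      ≤ ({u ∈ L | u (Fin.last n) = 0}.ncard : ℝ) + {u ∈ L | u (Fin.last n) ≠ 0}.ncard := by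
        exact_mod_cast hsplit ▸ ncard_union_le _ _
    _ ≤ _ := add_le_add (by exact_mod_cast hzero) (ncard_last_ne_zero_lt hβ n).le

lemma ncard_betaLang_le_geom_sum (hβ : 1 < β) (n : ℕ) :
    ((betaLang β n).ncard : ℝ) ≤ ∑ i ∈ Finset.range (n + 1), β ^ i := by
  induction n with
  | zero => simpa using ncard_le_one_of_subsingleton (betaLang β 0)
  | succ n ih =>
    rw [Finset.sum_range_succ]
    linarith [ncard_betaLang_succ_le hβ n]

end BetaShift

theorem stmt_1_general (β : ℝ) (hβ : 1 < β) (n : ℕ) :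
    β ^ n ≤ (Nat.card (betaLang β n) : ℝ) ∧
    (Nat.card (betaLang β n) : ℝ) ≤ (β / (β - 1)) * β ^ n := by
  rw [Nat.card_coe_set_eq]
  refine ⟨BetaShift.pow_le_ncard_betaLang hβ n,
    (BetaShift.ncard_betaLang_le_geom_sum hβ n).trans ?_⟩
  rw [geom_sum_eq hβ.ne', pow_succ, div_mul_eq_mul_div, mul_comm β]
  gcongr
  linarith

/-- the number of words of length `n` in the β-shift language satisfies
`β^n ≤ N_n(β) ≤ (β/(β-1))·β^n`. -/
theorem stmt_1 (β : ℝ) (hβ : 1 < β) (n : ℕ) (hn : 1 ≤ n) :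
    β ^ n ≤ (Nat.card (betaLang β n) : ℝ) ∧
    (Nat.card (betaLang β n) : ℝ) ≤ (β / (β - 1)) * β ^ n :=
  stmt_1_general β hβ n
end

section
/- For every β > 1 and every n ≥ 1 there exists δ > 0 such that for every β' ∈ [β, β + δ) one has ⌊β' · T_{β'}^{j−1}(1)⌋ = ⌊β · T_β^{j−1}(1)⌋ for all j = 1, …, n; that is, the first n letters of the maximal word w^β of the β-shift are locally constant from the right as a function of β. -/
open Filter Topology

section Order

variable {α ι : Type*} {l : Filter ι}

theorem tendsto_fract_nhdsGE [Ring α] [LinearOrder α] [IsStrictOrderedRing α] [FloorRing α]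
    [TopologicalSpace α] [OrderClosedTopology α] [IsTopologicalAddGroup α] (a : α) :
    Tendsto (Int.fract : α → α) (𝓝[≥] a) (𝓝[≥] Int.fract a) := by
  have hfloor : ∀ᶠ x in 𝓝[≥] a, ⌊x⌋ = ⌊a⌋ := tendsto_pure.1 (tendsto_floor_right_pure_floor a)
  have hsub : Tendsto (fun x : α => x - ⌊a⌋) (𝓝[≥] a) (𝓝[≥] Int.fract a) :=
    tendsto_nhdsWithin_iff.2
      ⟨(tendsto_id.sub_const _).mono_left nhdsWithin_le_nhds,
        eventually_nhdsWithin_of_forall fun x (hx : a ≤ x) => sub_le_sub_right hx _⟩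
  exact hsub.congr' (hfloor.mono fun x hx => by rw [Int.fract, hx])

theorem Filter.Tendsto.mul_nhdsGE [Semiring α] [PartialOrder α] [IsOrderedRing α]
    [TopologicalSpace α] [ContinuousMul α] {f g : ι → α} {a b : α}
    (hf : Tendsto f l (𝓝[≥] a)) (hg : Tendsto g l (𝓝[≥] b)) (ha : 0 ≤ a) (hb : 0 ≤ b) :
    Tendsto (f * g) l (𝓝[≥] (a * b)) := by
  rw [tendsto_nhdsWithin_iff] at hf hg ⊢
  refine ⟨hf.1.mul hg.1, ?_⟩
  filter_upwards [hf.2, hg.2] with x (hx : a ≤ f x) (hy : b ≤ g x)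
  exact mul_le_mul hx hy hb (ha.trans hx)

end Order

theorem betaMap_iterate_nonneg (β : ℝ) {x : ℝ} (hx : 0 ≤ x) (m : ℕ) :
    0 ≤ (betaMap β)^[m] x := by
  cases m with
  | zero => exact hx
  | succ m =>
    rw [Function.iterate_succ_apply', betaMap, Int.self_sub_floor]
    exact Int.fract_nonneg _

theorem tendsto_betaMap_iterate {β x : ℝ} (hβ : 0 ≤ β) (hx : 0 ≤ x) (m : ℕ) :
    Tendsto (fun β' => (betaMap β')^[m] x) (𝓝[≥] β) (𝓝[≥] ((betaMap β)^[m] x)) := by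
  induction m with
  | zero => exact tendsto_const_nhdsWithin Set.self_mem_Ici
  | succ m ih =>
    simp only [Function.iterate_succ_apply', betaMap, Int.self_sub_floor]
    exact (tendsto_fract_nhdsGE _).comp
      (tendsto_id.mul_nhdsGE ih hβ (betaMap_iterate_nonneg β hx m))

theorem eventually_floor_mul_betaMap_iterate_eq {β x : ℝ} (hβ : 0 ≤ β) (hx : 0 ≤ x) (m : ℕ) :
    ∀ᶠ β' in 𝓝[≥] β, ⌊β' * (betaMap β')^[m] x⌋ = ⌊β * (betaMap β)^[m] x⌋ :=
  tendsto_pure.1 <| (tendsto_floor_right_pure_floor _).comp <|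
    tendsto_id.mul_nhdsGE (tendsto_betaMap_iterate hβ hx m) hβ (betaMap_iterate_nonneg β hx m)

theorem stmt_2_general (β : ℝ) (hβ : 1 < β) (n : ℕ) :
    ∃ δ : ℝ, 0 < δ ∧ ∀ β' : ℝ, β ≤ β' → β' < β + δ →
      ∀ j : ℕ, 1 ≤ j → j ≤ n →
        ⌊β' * (betaMap β')^[j - 1] (1 : ℝ)⌋ = ⌊β * (betaMap β)^[j - 1] (1 : ℝ)⌋ := by
  have hfirst : ∀ᶠ β' in 𝓝[≥] β, ∀ m ∈ Set.Iio n,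
      ⌊β' * (betaMap β')^[m] (1 : ℝ)⌋ = ⌊β * (betaMap β)^[m] (1 : ℝ)⌋ :=
    (Set.finite_Iio n).eventually_all.2 fun m _ =>
      eventually_floor_mul_betaMap_iterate_eq (by linarith) zero_le_one m
  obtain ⟨u, hβu, hsub⟩ := mem_nhdsGE_iff_exists_Ico_subset.1 hfirst
  refine ⟨u - β, sub_pos.2 hβu, fun β' hβ' hβ'u j hj hjn => ?_⟩
  exact hsub ⟨hβ', by linarith⟩ (j - 1) (by simp only [Set.mem_Iio]; omega)

/-- the first `n` letters of the maximal word `w^β_j = ⌊β·T_β^{j-1}(1)⌋`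
of the β-shift are locally constant from the right as a function of `β`. -/
theorem stmt_2 (β : ℝ) (hβ : 1 < β) (n : ℕ) (hn : 1 ≤ n) :
    ∃ δ : ℝ, 0 < δ ∧ ∀ β' : ℝ, β ≤ β' → β' < β + δ →
      ∀ j : ℕ, 1 ≤ j → j ≤ n →
        ⌊β' * (betaMap β')^[j - 1] (1 : ℝ)⌋ = ⌊β * (betaMap β)^[j - 1] (1 : ℝ)⌋ :=
  stmt_2_general β hβ n
end

section
/- Fix γ ∈ ℝ. A word (y_0, …, y_{n−1}) ∈ ℤ^n occurs as a factor of y^γ (i.e., there exists k ∈ ℤ with y_i = (y^γ)_{k+i} for i = 0, …, n−1) if and only if it is a Sturmian word of slope γ, i.e., there exists a ∈ [0,1) such that y_i = ⌊(i+1)γ + a⌋ − ⌊iγ + a⌋ for i = 0, …, n−1. Moreover, in that case the weight y_0 + … + y_{n−1} equals either ⌊nγ⌋ or ⌈nγ⌉. -/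
/-!
A factor of `y^γ` starting at `k` is the mechanical word `i ↦ ⌊(i+1)γ + a⌋ - ⌊iγ + a⌋` with
intercept `a = kγ`, and the intercept only matters modulo `1`, so it may be taken to be
`fract (kγ) ∈ [0,1)`. Conversely, for an intercept `a`, let `m₀ ≤ n` minimise `fract (m₀γ + a)`;
lowering `a` by that amount changes none of the floors `⌊mγ + a⌋`, `m ≤ n`, and yields the
intercept `-m₀γ` modulo `1`. The weight telescopes to `⌊nγ + a⌋ - ⌊a⌋`.
-/

/-- The bi-infinite Sturmian sequence of slope `γ`: `(y^γ)_i = ⌊(i+1)γ⌋ - ⌊iγ⌋`. -/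
noncomputable def sturmSeq (γ : ℝ) : ℤ → ℤ := fun i => ⌊((i : ℝ) + 1) * γ⌋ - ⌊(i : ℝ) * γ⌋

/-- A finite word is a Sturmian word of slope `γ` if it is given by
`y_i = ⌊(i+1)γ + a⌋ - ⌊iγ + a⌋` for some intercept `a ∈ [0,1)`. -/
def IsSturmianWord (γ : ℝ) {n : ℕ} (y : Fin n → ℤ) : Prop :=
  ∃ a : ℝ, 0 ≤ a ∧ a < 1 ∧
    ∀ i : Fin n, y i = ⌊((i : ℕ) + 1 : ℝ) * γ + a⌋ - ⌊((i : ℕ) : ℝ) * γ + a⌋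

noncomputable def mechanicalWord (γ a : ℝ) (i : ℕ) : ℤ :=
  ⌊((i : ℝ) + 1) * γ + a⌋ - ⌊(i : ℝ) * γ + a⌋

lemma isSturmianWord_iff (γ : ℝ) {n : ℕ} (y : Fin n → ℤ) :
    IsSturmianWord γ y ↔ ∃ a : ℝ, 0 ≤ a ∧ a < 1 ∧ ∀ i : Fin n, y i = mechanicalWord γ a i :=
  Iff.rfl

lemma sturmSeq_add_eq_mechanicalWord (γ : ℝ) (k : ℤ) (i : ℕ) :
    sturmSeq γ (k + i) = mechanicalWord γ (k * γ) i := by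
  simp only [sturmSeq, mechanicalWord]
  push_cast
  ring_nf

lemma mechanicalWord_add_intCast (γ a : ℝ) (z : ℤ) :
    mechanicalWord γ (a + z) = mechanicalWord γ a := by
  ext i
  simp only [mechanicalWord, ← add_assoc, Int.floor_add_intCast]
  ring

lemma mechanicalWord_fract (γ a : ℝ) : mechanicalWord γ (Int.fract a) = mechanicalWord γ a := by
  rw [← mechanicalWord_add_intCast γ _ ⌊a⌋, Int.fract_add_floor]

lemma mechanicalWord_eq_of_floor_eq {γ a b : ℝ} {n : ℕ}
    (h : ∀ m ≤ n, ⌊(m : ℝ) * γ + a⌋ = ⌊(m : ℝ) * γ + b⌋) {i : ℕ} (hi : i < n) :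
    mechanicalWord γ a i = mechanicalWord γ b i := by
  have hsucc := h (i + 1) hi
  push_cast at hsucc
  simp only [mechanicalWord, hsucc, h i hi.le]

lemma floor_eq_of_floor_le_of_le {x y : ℝ} (h₁ : (⌊x⌋ : ℝ) ≤ y) (h₂ : y ≤ x) : ⌊y⌋ = ⌊x⌋ :=
  le_antisymm (Int.floor_mono h₂) (Int.le_floor.mpr h₁)

lemma exists_mechanicalWord_intCast_mul_eq (γ a : ℝ) (n : ℕ) :
    ∃ k : ℤ, ∀ i < n, mechanicalWord γ (k * γ) i = mechanicalWord γ a i := by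
  obtain ⟨m₀, -, hmin⟩ := Finset.exists_min_image (Finset.range (n + 1))
    (fun m : ℕ => Int.fract ((m : ℝ) * γ + a)) ⟨0, by simp⟩
  set b := a - Int.fract ((m₀ : ℝ) * γ + a)
  have hfloor : ∀ m ≤ n, ⌊(m : ℝ) * γ + b⌋ = ⌊(m : ℝ) * γ + a⌋ := by
    intro m hm
    have hle := hmin m (Finset.mem_range.mpr (Nat.lt_succ_of_le hm))
    refine floor_eq_of_floor_le_of_le ?_ ?_
    · rw [← Int.self_sub_fract]; simp only [b] at hle ⊢; linarith
    · linarith [Int.fract_nonneg ((m₀ : ℝ) * γ + a)]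
  have hb : b = ((-m₀ : ℤ) : ℝ) * γ + ⌊(m₀ : ℝ) * γ + a⌋ := by
    simp only [b, Int.fract]; push_cast; ring
  refine ⟨-m₀, fun i hi => ?_⟩
  rw [← mechanicalWord_add_intCast γ _ ⌊(m₀ : ℝ) * γ + a⌋, ← hb]
  exact mechanicalWord_eq_of_floor_eq hfloor hi

lemma sum_mechanicalWord (γ a : ℝ) (n : ℕ) :
    ∑ i : Fin n, mechanicalWord γ a i = ⌊(n : ℝ) * γ + a⌋ - ⌊a⌋ := by
  have htelescope : ∀ i, mechanicalWord γ a i = ⌊((i + 1 : ℕ) : ℝ) * γ + a⌋ - ⌊(i : ℝ) * γ + a⌋ :=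
    fun i => by simp only [mechanicalWord, Nat.cast_succ]
  rw [Fin.sum_univ_eq_sum_range (mechanicalWord γ a), Finset.sum_congr rfl fun i _ => htelescope i,
    Finset.sum_range_sub (fun m : ℕ => ⌊(m : ℝ) * γ + a⌋)]
  simp

lemma floor_add_eq_floor_or_ceil {x a : ℝ} (ha₀ : 0 ≤ a) (ha₁ : a < 1) :
    ⌊x + a⌋ = ⌊x⌋ ∨ ⌊x + a⌋ = ⌈x⌉ := by
  have hlow : ⌊x⌋ ≤ ⌊x + a⌋ := Int.floor_mono (by linarith)
  have hup : ⌊x + a⌋ ≤ ⌈x⌉ := by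
    rw [← Int.lt_add_one_iff, Int.floor_lt]
    push_cast
    linarith [Int.le_ceil x]
  have := Int.ceil_le_floor_add_one x
  omega

/-- a word occurs as a factor of `y^γ` iff it is a Sturmian word of slope `γ`;
and in that case its weight equals `⌊nγ⌋` or `⌈nγ⌉`. -/
theorem stmt_4 (γ : ℝ) (n : ℕ) (y : Fin n → ℤ) :
    ((∃ k : ℤ, ∀ i : Fin n, y i = sturmSeq γ (k + (i : ℕ))) ↔ IsSturmianWord γ y) ∧
    (IsSturmianWord γ y →
      (∑ i, y i = ⌊(n : ℝ) * γ⌋ ∨ ∑ i, y i = ⌈(n : ℝ) * γ⌉)) := by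
  rw [isSturmianWord_iff]
  refine ⟨⟨?_, ?_⟩, ?_⟩
  · rintro ⟨k, hk⟩
    refine ⟨Int.fract (k * γ), Int.fract_nonneg _, Int.fract_lt_one _, fun i => ?_⟩
    rw [hk, sturmSeq_add_eq_mechanicalWord, mechanicalWord_fract]
  · rintro ⟨a, -, -, hy⟩
    obtain ⟨k, hk⟩ := exists_mechanicalWord_intCast_mul_eq γ a n
    exact ⟨k, fun i => by rw [hy, sturmSeq_add_eq_mechanicalWord, hk i i.isLt]⟩
  · rintro ⟨a, ha₀, ha₁, hy⟩
    have hweight : ∑ i, y i = ⌊(n : ℝ) * γ + a⌋ := by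
      rw [Finset.sum_congr rfl fun i _ => hy i, sum_mechanicalWord,
        Int.floor_eq_zero_iff.mpr ⟨ha₀, ha₁⟩, sub_zero]
    rw [hweight]
    exact floor_add_eq_floor_or_ceil ha₀ ha₁
end

section
/- Fix γ ∈ ℝ. A sequence y = (y_i)_{i∈ℤ} ∈ ℤ^ℤ belongs to Y_γ if and only if either (a) there exists a ∈ [0,1) such that y_i = ⌊γ(i+1) + a⌋ − ⌊γ i + a⌋ for every i ∈ ℤ, or (b) there exists a ∈ (0,1] such that y_i = ⌈γ(i+1) + a⌉ − ⌈γ i + a⌉ for every i ∈ ℤ. -/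
/-- The Sturmian system `Y_γ`: the closure (product topology, `ℤ` discrete) of the
shift-orbit of `y^γ`. -/
noncomputable def sturmSystem (γ : ℝ) : Set (ℤ → ℤ) :=
  closure {z : ℤ → ℤ | ∃ n : ℤ, z = fun i => sturmSeq γ (i + n)}

/-!
A shift of `y^γ` is the lower mechanical word `lowerMechanical γ b` with intercept
`b = fract (n γ) ∈ [0, 1)`. Coordinatewise, `b ↦ lowerMechanical γ b` is locally constant to the
right of every `a`, and to the left of `a` it equals the upper mechanical word
`upperMechanical γ a`. So a limit of shifts, taken along intercepts accumulating at some
`a ∈ [0, 1]` from the right or from the left, is a lower or an upper mechanical word.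

Conversely, on a finite window a mechanical word with intercept `a` does not change when `a` is
lowered to the largest jump point of the window below `a` (resp. strictly below `a`), i.e. to
`⌊γ j + a⌋ - γ j` (resp. `⌈γ j + a⌉ - 1 - γ j`) for a suitable `j`. Such intercepts lie in
`ℤ + ℤ γ`, so the resulting words are shifts of `y^γ`.
-/

open Filter Topology Set

section Topology

variable {X Y : Type*} [TopologicalSpace X] [TopologicalSpace Y]

theorem exists_mapClusterPt_nhdsWithin_of_mem_closure_image {f : X → Y} {s K : Set X}
    (hK : IsCompact K) (hsK : s ⊆ K) {y : Y} (hy : y ∈ closure (f '' s)) :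
    ∃ a ∈ K, MapClusterPt y (𝓝[s] a) f := by
  have : (𝓟 s ⊓ comap f (𝓝 y)).NeBot := by
    rw [← map_neBot_iff f, Filter.push_pull, map_principal, inf_comm]
    exact mem_closure_iff_clusterPt.1 hy
  obtain ⟨a, ha, hcl⟩ :=
    hK.exists_clusterPt (f := 𝓟 s ⊓ comap f (𝓝 y)) (inf_le_left.trans (principal_mono.2 hsK))
  refine ⟨a, ha, ?_⟩
  rw [mapClusterPt_def, ClusterPt, inf_comm, ← Filter.push_pull, map_neBot_iff, nhdsWithin,
    inf_assoc]
  exact hcl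

theorem MapClusterPt.eq_of_tendsto [T2Space Y] {α : Type*} {F : Filter α} {f : α → Y} {y z : Y}
    (h : MapClusterPt y F f) (hf : Tendsto f F (𝓝 z)) : y = z := by
  by_contra hyz
  exact clusterPt_iff_not_disjoint.1 ((mapClusterPt_def.1 h).mono hf)
    (disjoint_nhds_nhds.2 hyz)

theorem MapClusterPt.nonempty_of_nhdsWithin {f : X → Y} {s : Set X} {a : X} {y : Y}
    (h : MapClusterPt y (𝓝[s] a) f) : s.Nonempty :=
  have : (𝓝[s] a).NeBot := (map_neBot_iff f).1 (ClusterPt.neBot h |>.mono inf_le_right)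
  Filter.nonempty_of_mem (self_mem_nhdsWithin (a := a))

theorem mem_closure_of_forall_exists_eq_of_natAbs_le {α : Type*} [TopologicalSpace α]
    [DiscreteTopology α] {S : Set (ℤ → α)} {y : ℤ → α}
    (h : ∀ N : ℕ, ∃ s ∈ S, ∀ i : ℤ, i.natAbs ≤ N → s i = y i) : y ∈ closure S := by
  choose s hsS hs using h
  refine mem_closure_of_tendsto (f := s) (b := atTop) (tendsto_pi_nhds.2 fun i => ?_)
    (Eventually.of_forall hsS)
  rw [nhds_discrete, tendsto_pure]
  filter_upwards [eventually_ge_atTop i.natAbs] with N hN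
  exact hs N i hN

end Topology

namespace Sturmian

noncomputable def lowerMechanical (γ a : ℝ) : ℤ → ℤ :=
  fun i => ⌊γ * ((i : ℝ) + 1) + a⌋ - ⌊γ * (i : ℝ) + a⌋

noncomputable def upperMechanical (γ a : ℝ) : ℤ → ℤ :=
  fun i => ⌈γ * ((i : ℝ) + 1) + a⌉ - ⌈γ * (i : ℝ) + a⌉

def sturmOrbit (γ : ℝ) : Set (ℤ → ℤ) :=
  {z | ∃ n : ℤ, z = fun i => sturmSeq γ (i + n)}

theorem lowerMechanical_add_intCast (γ a : ℝ) (m : ℤ) :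
    lowerMechanical γ (a + m) = lowerMechanical γ a := by
  funext i
  simp only [lowerMechanical, ← add_assoc, Int.floor_add_intCast]
  ring

theorem sturmSeq_shift_eq_lowerMechanical (γ : ℝ) (n : ℤ) :
    (fun i => sturmSeq γ (i + n)) = lowerMechanical γ (n * γ) := by
  funext i
  simp only [sturmSeq, lowerMechanical]
  push_cast
  ring_nf

theorem sturmOrbit_eq_image_fract (γ : ℝ) :
    sturmOrbit γ = lowerMechanical γ '' range fun n : ℤ => Int.fract (n * γ) := by
  ext z
  simp only [sturmOrbit, sturmSeq_shift_eq_lowerMechanical, ← range_comp, mem_range,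
    Function.comp_def]
  refine exists_congr fun n => ?_
  rw [eq_comm, ← lowerMechanical_add_intCast γ (Int.fract _) ⌊(n : ℝ) * γ⌋, Int.fract_add_floor]

theorem lowerMechanical_intCast_sub_mul_mem_sturmOrbit (γ : ℝ) (m j : ℤ) :
    lowerMechanical γ (m - γ * j) ∈ sturmOrbit γ := by
  have h : (m : ℝ) - γ * j = ((-j : ℤ) : ℝ) * γ + m := by push_cast; ring
  exact ⟨-j, by rw [h, lowerMechanical_add_intCast, sturmSeq_shift_eq_lowerMechanical]⟩

theorem tendsto_floor_const_add_right_pure_floor (x a : ℝ) :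
    Tendsto (fun b => ⌊x + b⌋) (𝓝[≥] a) (pure ⌊x + a⌋) :=
  (tendsto_floor_right_pure_floor (x + a)).comp <| tendsto_nhdsWithin_iff.2
    ⟨(tendsto_const_nhds.add tendsto_id).mono_left nhdsWithin_le_nhds,
      eventually_nhdsWithin_of_forall fun _ hb => (add_le_add_iff_left x).2 hb⟩

theorem tendsto_floor_const_add_left_pure_ceil_sub_one (x a : ℝ) :
    Tendsto (fun b => ⌊x + b⌋) (𝓝[<] a) (pure (⌈x + a⌉ - 1)) :=
  (tendsto_floor_left_pure_ceil_sub_one (x + a)).comp <| tendsto_nhdsWithin_iff.2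
    ⟨(tendsto_const_nhds.add tendsto_id).mono_left nhdsWithin_le_nhds,
      eventually_nhdsWithin_of_forall fun _ hb => (add_lt_add_iff_left x).2 hb⟩

theorem tendsto_lowerMechanical_nhdsGE (γ a : ℝ) :
    Tendsto (lowerMechanical γ) (𝓝[≥] a) (𝓝 (lowerMechanical γ a)) := by
  refine tendsto_pi_nhds.2 fun i => ?_
  rw [nhds_discrete, tendsto_pure]
  filter_upwards [tendsto_pure.1 (tendsto_floor_const_add_right_pure_floor (γ * (i + 1)) a),
    tendsto_pure.1 (tendsto_floor_const_add_right_pure_floor (γ * i) a)] with b h₁ h₀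
  simp only [lowerMechanical, h₁, h₀]

theorem tendsto_lowerMechanical_nhdsLT (γ a : ℝ) :
    Tendsto (lowerMechanical γ) (𝓝[<] a) (𝓝 (upperMechanical γ a)) := by
  refine tendsto_pi_nhds.2 fun i => ?_
  rw [nhds_discrete, tendsto_pure]
  filter_upwards [tendsto_pure.1 (tendsto_floor_const_add_left_pure_ceil_sub_one (γ * (i + 1)) a),
    tendsto_pure.1 (tendsto_floor_const_add_left_pure_ceil_sub_one (γ * i) a)] with b h₁ h₀
  simp only [lowerMechanical, upperMechanical, h₁, h₀]
  ring

theorem eq_lowerMechanical_or_eq_upperMechanical_of_mem_sturmSystem {γ : ℝ} {y : ℤ → ℤ}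
    (hy : y ∈ sturmSystem γ) :
    (∃ a, 0 ≤ a ∧ a < 1 ∧ y = lowerMechanical γ a) ∨
      ∃ a, 0 < a ∧ a ≤ 1 ∧ y = upperMechanical γ a := by
  set B := range fun n : ℤ => Int.fract (n * γ)
  have hB : B ⊆ Ico 0 1 := range_subset_iff.2 fun n => ⟨Int.fract_nonneg _, Int.fract_lt_one _⟩
  have hyB : y ∈ closure (lowerMechanical γ '' B) := sturmOrbit_eq_image_fract γ ▸ hy
  obtain ⟨a, ha, hcl⟩ := exists_mapClusterPt_nhdsWithin_of_mem_closure_image isCompact_Icc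
    (hB.trans Ico_subset_Icc_self) hyB
  rw [← inter_univ B, ← Iio_union_Ici (a := a), inter_union_distrib_left, nhdsWithin_union,
    mapClusterPt_def, Filter.map_sup, clusterPt_sup] at hcl
  rcases hcl with hlt | hge
  · obtain ⟨b, hbB, hba⟩ := MapClusterPt.nonempty_of_nhdsWithin hlt
    exact .inr ⟨a, (hB hbB).1.trans_lt hba, ha.2, MapClusterPt.eq_of_tendsto hlt <|
      (tendsto_lowerMechanical_nhdsLT γ a).mono_left (nhdsWithin_mono _ inter_subset_right)⟩
  · obtain ⟨b, hbB, hab⟩ := MapClusterPt.nonempty_of_nhdsWithin hge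
    exact .inl ⟨a, ha.1, hab.trans_lt (hB hbB).2, MapClusterPt.eq_of_tendsto hge <|
      (tendsto_lowerMechanical_nhdsGE γ a).mono_left (nhdsWithin_mono _ inter_subset_right)⟩

theorem exists_floor_add_floor_sub_eq {ι : Type*} (s : Finset ι) (hs : s.Nonempty) (x : ι → ℝ)
    (a : ℝ) : ∃ j ∈ s, ∀ i ∈ s, ⌊x i + (⌊x j + a⌋ - x j)⌋ = ⌊x i + a⌋ := by
  obtain ⟨j, hj, hmax⟩ := s.exists_max_image (fun i => ⌊x i + a⌋ - x i) hs
  refine ⟨j, hj, fun i hi => Int.floor_eq_iff.2 ⟨by linarith [hmax i hi], ?_⟩⟩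
  linarith [Int.floor_le (x j + a), Int.lt_floor_add_one (x i + a)]

theorem exists_floor_add_ceil_sub_eq {ι : Type*} (s : Finset ι) (hs : s.Nonempty) (x : ι → ℝ)
    (a : ℝ) : ∃ j ∈ s, ∀ i ∈ s, ⌊x i + (⌈x j + a⌉ - 1 - x j)⌋ = ⌈x i + a⌉ - 1 := by
  obtain ⟨j, hj, hmax⟩ := s.exists_max_image (fun i => ⌈x i + a⌉ - 1 - x i) hs
  refine ⟨j, hj, fun i hi => Int.floor_eq_iff.2 ⟨by push_cast; linarith [hmax i hi], ?_⟩⟩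
  push_cast
  linarith [Int.ceil_lt_add_one (x j + a), Int.le_ceil (x i + a)]

theorem lowerMechanical_mem_sturmSystem (γ a : ℝ) : lowerMechanical γ a ∈ sturmSystem γ := by
  refine mem_closure_of_forall_exists_eq_of_natAbs_le fun N => ?_
  obtain ⟨j, -, hj⟩ := exists_floor_add_floor_sub_eq (Finset.Icc (-N : ℤ) (N + 1))
    (Finset.nonempty_Icc.2 (by omega)) (fun i => γ * i) a
  refine ⟨_, lowerMechanical_intCast_sub_mul_mem_sturmOrbit γ ⌊γ * j + a⌋ j, fun i hi => ?_⟩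
  have h₀ := hj i (Finset.mem_Icc.2 ⟨by omega, by omega⟩)
  have h₁ := hj (i + 1) (Finset.mem_Icc.2 ⟨by omega, by omega⟩)
  push_cast at h₀ h₁
  simp only [lowerMechanical, h₀, h₁]

theorem upperMechanical_mem_sturmSystem (γ a : ℝ) : upperMechanical γ a ∈ sturmSystem γ := by
  refine mem_closure_of_forall_exists_eq_of_natAbs_le fun N => ?_
  obtain ⟨j, -, hj⟩ := exists_floor_add_ceil_sub_eq (Finset.Icc (-N : ℤ) (N + 1))
    (Finset.nonempty_Icc.2 (by omega)) (fun i => γ * i) a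
  have hmem := lowerMechanical_intCast_sub_mul_mem_sturmOrbit γ (⌈γ * j + a⌉ - 1) j
  push_cast at hmem
  refine ⟨_, hmem, fun i hi => ?_⟩
  have h₀ := hj i (Finset.mem_Icc.2 ⟨by omega, by omega⟩)
  have h₁ := hj (i + 1) (Finset.mem_Icc.2 ⟨by omega, by omega⟩)
  push_cast at h₀ h₁
  simp only [lowerMechanical, upperMechanical, h₀, h₁]
  ring

end Sturmian

/-- characterization of the members of `Y_γ` via floors (intercept in `[0,1)`)
or ceilings (intercept in `(0,1]`). -/
theorem stmt_5 (γ : ℝ) (y : ℤ → ℤ) :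
    y ∈ sturmSystem γ ↔
      ((∃ a : ℝ, 0 ≤ a ∧ a < 1 ∧
          ∀ i : ℤ, y i = ⌊γ * ((i : ℝ) + 1) + a⌋ - ⌊γ * (i : ℝ) + a⌋) ∨
       (∃ a : ℝ, 0 < a ∧ a ≤ 1 ∧
          ∀ i : ℤ, y i = ⌈γ * ((i : ℝ) + 1) + a⌉ - ⌈γ * (i : ℝ) + a⌉)) := by
  constructor
  · intro hy
    rcases Sturmian.eq_lowerMechanical_or_eq_upperMechanical_of_mem_sturmSystem hy with
      ⟨a, h₀, h₁, rfl⟩ | ⟨a, h₀, h₁, rfl⟩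
    exacts [.inl ⟨a, h₀, h₁, fun _ => rfl⟩, .inr ⟨a, h₀, h₁, fun _ => rfl⟩]
  · rintro (⟨a, -, -, hy⟩ | ⟨a, -, -, hy⟩)
    · exact funext hy ▸ Sturmian.lowerMechanical_mem_sturmSystem γ a
    · exact funext hy ▸ Sturmian.upperMechanical_mem_sturmSystem γ a
end

section
/- For every j ≥ 1 and every n ∈ ℤ, the number of words (y_0, …, y_{j−1}) ∈ ℤ^j that are Sturmian words of slope γ for some γ ∈ ℝ and have weight y_0 + … + y_{j−1} = n is at most j(j+1). -/
/-!
Write `s_k = ⌊k γ + a⌋`. For a Sturmian word of weight `n` we have `s_j = n`, and since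
`k γ + a = (k / j) (j γ + a) + (1 - k / j) a` lies in `[k n / j, k n / j + 1)`, each `s_k` is
`⌊k n / j⌋` or `⌊k n / j⌋ + 1`. The word is therefore determined by the set of `k ∈ [1, j]` at which
the affine function `(γ, a) ↦ k γ + a - ⌊k n / j⌋ - 1` is nonnegative. On a space of dimension `d`,
`m` affine functions realise at most `∑_{k ≤ d} (m choose k)` such sign patterns: adding one
function creates at most as many new patterns as the others realise on its zero set, a space of
dimension `d - 1`. For `m = j` and `d = 2` this gives `1 + j + (j choose 2) ≤ j (j + 1)`.
-/

open Module

theorem sum_range_succ_choose_succ (m d : ℕ) :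
    ∑ k ∈ Finset.range (d + 2), (m + 1).choose k =
      ∑ k ∈ Finset.range (d + 2), m.choose k + ∑ k ∈ Finset.range (d + 1), m.choose k := by
  rw [Finset.sum_range_succ' _ (d + 1), Finset.sum_range_succ' (m.choose ·) (d + 1)]
  simp only [Nat.choose_succ_succ, Finset.sum_add_distrib, Nat.choose_zero_right]
  ring

theorem setOf_eq_zero_eq_range {E : Type*} [AddCommGroup E] [Module ℝ E] (g : E →ᵃ[ℝ] ℝ)
    {p : E} (hp : g p = 0) :
    {x | g x = 0} = Set.range ((LinearMap.ker g.linear).subtype.toAffineMap +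
      AffineMap.const ℝ (LinearMap.ker g.linear) p) := by
  ext x
  have hx : g.linear (x - p) = g x := by
    rw [← vsub_eq_sub, AffineMap.linearMap_vsub, hp, vsub_eq_sub, sub_zero]
  refine ⟨fun h => ⟨⟨x - p, by rwa [LinearMap.mem_ker, hx]⟩, by simp⟩, ?_⟩
  rintro ⟨v, rfl⟩
  simp [← vadd_eq_add, AffineMap.map_vadd, hp]

section SignPattern

variable {ι X : Type*}

noncomputable def signPattern (f : ι → X → ℝ) (s : Finset ι) (x : X) : Finset ι :=
  {i ∈ s | 0 ≤ f i x}

variable {f : ι → X → ℝ} {s : Finset ι} {a : ι} {x : X}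

theorem signPattern_subset : signPattern f s x ⊆ s := Finset.filter_subset _ _

theorem finite_range_signPattern (f : ι → X → ℝ) (s : Finset ι) :
    (Set.range (signPattern f s)).Finite :=
  s.powerset.finite_toSet.subset <| by
    rintro _ ⟨x, rfl⟩
    simpa using signPattern_subset

theorem signPattern_insert_of_neg [DecidableEq ι] (h : f a x < 0) :
    signPattern f (insert a s) x = signPattern f s x := by
  simp [signPattern, Finset.filter_insert, h.not_ge]

theorem signPattern_insert_of_nonneg [DecidableEq ι] (h : 0 ≤ f a x) :
    signPattern f (insert a s) x = insert a (signPattern f s x) := by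
  simp [signPattern, Finset.filter_insert, h]

theorem ncard_range_signPattern_insert_le [DecidableEq ι] (ha : a ∉ s) :
    (Set.range (signPattern f (insert a s))).ncard ≤ (Set.range (signPattern f s)).ncard +
      (signPattern f s '' {x | f a x < 0} ∩ signPattern f s '' {x | 0 ≤ f a x}).ncard := by
  set A := signPattern f s '' {x | f a x < 0}
  set B := signPattern f s '' {x | 0 ≤ f a x}
  have hfin := finite_range_signPattern f s
  have hA : A ⊆ Set.range (signPattern f s) := Set.image_subset_range _ _
  have hB : B ⊆ Set.range (signPattern f s) := Set.image_subset_range _ _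
  have hsplit : Set.range (signPattern f (insert a s)) = A ∪ insert a '' B := by
    ext t
    constructor
    · rintro ⟨x, rfl⟩
      rcases lt_or_ge (f a x) 0 with h | h
      · exact Or.inl ⟨x, h, (signPattern_insert_of_neg h).symm⟩
      · exact Or.inr ⟨_, ⟨x, h, rfl⟩, (signPattern_insert_of_nonneg h).symm⟩
    · rintro (⟨x, h, rfl⟩ | ⟨_, ⟨x, h, rfl⟩, rfl⟩)
      · exact ⟨x, signPattern_insert_of_neg h⟩
      · exact ⟨x, signPattern_insert_of_nonneg h⟩
  have hinj : Set.InjOn (insert a) B := by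
    rintro _ ⟨x, -, rfl⟩ _ ⟨x', -, rfl⟩ h
    simpa [Finset.erase_insert fun h => ha (signPattern_subset h)] using
      congrArg (Finset.erase · a) h
  calc (Set.range (signPattern f (insert a s))).ncard
      ≤ A.ncard + (insert a '' B).ncard := hsplit ▸ Set.ncard_union_le _ _
    _ = (A ∪ B).ncard + (A ∩ B).ncard := by
      rw [hinj.ncard_image, Set.ncard_union_add_ncard_inter _ _ (hfin.subset hA)
        (hfin.subset hB)]
    _ ≤ _ := by grw [Set.ncard_le_ncard (Set.union_subset hA hB) hfin]

theorem signPattern_image_neg_inter_image_nonneg_subset {V P : Type*} [AddCommGroup V]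
    [Module ℝ V] [AddTorsor V P] (f : ι → P →ᵃ[ℝ] ℝ) (s : Finset ι) (a : ι) :
    signPattern (fun i => f i) s '' {x | f a x < 0} ∩
        signPattern (fun i => f i) s '' {x | 0 ≤ f a x} ⊆
      signPattern (fun i => f i) s '' {x | f a x = 0} := by
  rintro _ ⟨⟨x₀, h₀, rfl⟩, x₁, h₁, hpat⟩
  simp only [Set.mem_ofPred_eq] at h₀ h₁
  have hd : 0 < f a x₁ - f a x₀ := by linarith
  -- the parameter at which `f a` vanishes on the segment from `x₀` to `x₁`
  set c := -f a x₀ / (f a x₁ - f a x₀)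
  have hc : c ∈ Set.Icc (0 : ℝ) 1 :=
    ⟨div_nonneg (neg_nonneg.2 h₀.le) hd.le, (div_le_one hd).2 (by linarith)⟩
  refine ⟨AffineMap.lineMap x₀ x₁ c, ?_, Finset.filter_congr fun i hi => ?_⟩
  · rw [Set.mem_ofPred_eq, AffineMap.apply_lineMap, AffineMap.lineMap_apply_ring',
      div_mul_cancel₀ _ hd.ne']
    ring
  have hsame : 0 ≤ f i x₁ ↔ 0 ≤ f i x₀ := by
    simpa [signPattern, hi] using congrArg (i ∈ ·) hpat
  show 0 ≤ f i _ ↔ 0 ≤ f i x₀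
  rw [AffineMap.apply_lineMap]
  by_cases h : 0 ≤ f i x₀
  · exact iff_of_true ((convex_Ici (0 : ℝ)).lineMap_mem h (hsame.2 h) hc) h
  · refine iff_of_false (not_le.2 ?_) h
    exact (convex_Iio (0 : ℝ)).lineMap_mem (not_le.1 h) (not_le.1 (mt hsame.1 h)) hc


theorem ncard_range_signPattern_le_sum_choose [DecidableEq ι] (s : Finset ι) {d : ℕ}
    {E : Type*} [AddCommGroup E] [Module ℝ E] [FiniteDimensional ℝ E] (hd : finrank ℝ E ≤ d)
    (f : ι → E →ᵃ[ℝ] ℝ) :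
    (Set.range (signPattern (fun i => f i) s)).ncard ≤
      ∑ k ∈ Finset.range (d + 1), s.card.choose k := by
  induction s using Finset.induction_on generalizing d E with
  | empty =>
    have hempty : signPattern (fun i => f i) ∅ = fun _ => ∅ := funext fun _ => Finset.filter_empty _
    simp [hempty, Finset.sum_range_succ']
  | insert a s ha ih =>
    refine (ncard_range_signPattern_insert_le ha).trans ?_
    rw [Finset.card_insert_of_notMem ha]
    obtain hI | ⟨t, ht⟩ := (signPattern (fun i => f i) s '' {x | f a x < 0} ∩
      signPattern (fun i => f i) s '' {x | 0 ≤ f a x}).eq_empty_or_nonempty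
    · rw [hI, Set.ncard_empty, add_zero]
      exact (ih hd f).trans (Finset.sum_le_sum fun k _ => Nat.choose_le_choose k s.card.le_succ)
    obtain ⟨p, hp, -⟩ := signPattern_image_neg_inter_image_nonneg_subset f s a ht
    obtain ⟨⟨x₀, hx₀, -⟩, -⟩ := ht
    have hK : finrank ℝ (LinearMap.ker (f a).linear) < finrank ℝ E := by
      refine Submodule.finrank_lt fun hK => ?_
      have := (f a).linearMap_vsub x₀ p
      rw [LinearMap.ker_eq_top.1 hK] at this
      simp_all
    obtain ⟨d, rfl⟩ : ∃ d', d = d' + 1 := ⟨d - 1, by omega⟩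
    calc _ ≤ ∑ k ∈ Finset.range (d + 2), s.card.choose k +
          (signPattern (fun i => f i) s '' {x | f a x = 0}).ncard :=
          add_le_add (ih hd f) (Set.ncard_le_ncard (signPattern_image_neg_inter_image_nonneg_subset
            f s a) ((finite_range_signPattern _ s).subset (Set.image_subset_range _ _)))
      _ ≤ ∑ k ∈ Finset.range (d + 2), s.card.choose k +
          ∑ k ∈ Finset.range (d + 1), s.card.choose k := by
        rw [setOf_eq_zero_eq_range (f a) hp, ← Set.range_comp]
        exact add_le_add le_rfl (ih (d := d) (by omega) fun i => (f i).comp _)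
      _ = _ := (sum_range_succ_choose_succ _ _).symm

end SignPattern

theorem Int.floor_eq_add_ite {m : ℤ} {x : ℝ} (h₁ : (m : ℝ) ≤ x) (h₂ : x < m + 2) :
    ⌊x⌋ = m + if (m : ℝ) + 1 ≤ x then 1 else 0 := by
  rw [Int.floor_eq_iff]
  split_ifs with h <;> push_cast <;> constructor <;> linarith

section Sturmian

variable (j : ℕ) (n : ℤ)

noncomputable def floorExcess (k : ℕ) : ℝ × ℝ →ᵃ[ℝ] ℝ :=
  ((k : ℝ) • LinearMap.fst ℝ ℝ ℝ + LinearMap.snd ℝ ℝ ℝ).toAffineMap +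
    AffineMap.const ℝ (ℝ × ℝ) (-((⌊(k * n : ℝ) / j⌋ : ℝ) + 1))

theorem floorExcess_apply (k : ℕ) (γ a : ℝ) :
    floorExcess j n k (γ, a) = k * γ + a - (⌊(k * n : ℝ) / j⌋ + 1) := by
  simp [floorExcess, sub_eq_add_neg]

noncomputable def wordOfPattern (P : Finset ℕ) (i : Fin j) : ℤ :=
  (⌊((i + 1 : ℕ) * n : ℝ) / j⌋ + if (i : ℕ) + 1 ∈ P then 1 else 0) -
    (⌊((i : ℕ) * n : ℝ) / j⌋ + if (i : ℕ) ∈ P then 1 else 0)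

variable {j n}

theorem div_le_mul_add_lt_div_add_one (hj : 0 < j) {k : ℕ} (hk : k ≤ j) {γ a : ℝ}
    (ha₀ : 0 ≤ a) (ha₁ : a < 1) (hn : ⌊j * γ + a⌋ = n) :
    (k * n : ℝ) / j ≤ k * γ + a ∧ k * γ + a < (k * n : ℝ) / j + 1 := by
  obtain ⟨hn₀, hn₁⟩ := Int.floor_eq_iff.1 hn
  have hjR : (0 : ℝ) < j := by exact_mod_cast hj
  have hkR : (k : ℝ) ≤ j := by exact_mod_cast hk
  have hid : (j : ℝ) * (k * γ + a) = k * (j * γ + a) + (j - k) * a := by ring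
  rw [div_le_iff₀ hjR, div_add_one hjR.ne', lt_div_iff₀ hjR]
  constructor
  · nlinarith [mul_le_mul_of_nonneg_left hn₀ k.cast_nonneg]
  · rcases k.eq_zero_or_pos with rfl | hk₀
    · simp only [CharP.cast_eq_zero, zero_mul, zero_add]
      nlinarith
    · have hk₀ : (0 : ℝ) < k := by exact_mod_cast hk₀
      nlinarith [mul_lt_mul_of_pos_left hn₁ hk₀]

theorem floor_mul_add_eq (hj : 0 < j) {k : ℕ} (hk : k ≤ j) {γ a : ℝ} (ha₀ : 0 ≤ a) (ha₁ : a < 1)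
    (hn : ⌊j * γ + a⌋ = n) :
    ⌊k * γ + a⌋ = ⌊(k * n : ℝ) / j⌋ +
      if k ∈ signPattern (fun k => floorExcess j n k) (Finset.Icc 1 j) (γ, a) then 1 else 0 := by
  obtain ⟨hlo, hhi⟩ := div_le_mul_add_lt_div_add_one hj hk ha₀ ha₁ hn
  have hE := Int.floor_le ((k * n : ℝ) / j)
  have hE' := Int.lt_floor_add_one ((k * n : ℝ) / j)
  rw [Int.floor_eq_add_ite (by linarith) (by linarith)]
  congr 1
  refine if_congr ?_ rfl rfl
  simp only [signPattern, Finset.mem_filter, Finset.mem_Icc, floorExcess_apply]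
  rcases k.eq_zero_or_pos with rfl | hk₀
  · simp only [CharP.cast_eq_zero, zero_mul, zero_div, Int.floor_zero, Int.cast_zero, zero_add]
    exact iff_of_false (not_le.2 ha₁) fun h => absurd h.1.1 (by norm_num)
  · constructor
    · intro h; exact ⟨⟨hk₀, hk⟩, by linarith⟩
    · intro h; linarith [h.2]

theorem mem_image_wordOfPattern (hj : 0 < j) {y : Fin j → ℤ} {γ : ℝ} (hy : IsSturmianWord γ y)
    (hsum : ∑ i, y i = n) :
    y ∈ wordOfPattern j n ''
      Set.range (signPattern (fun k => floorExcess j n k) (Finset.Icc 1 j)) := by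
  obtain ⟨a, ha₀, ha₁, hy⟩ := hy
  have hn : ⌊j * γ + a⌋ = n := by
    have htel := Finset.sum_range_sub (fun k : ℕ => ⌊(k : ℝ) * γ + a⌋) j
    rw [← Fin.sum_univ_eq_sum_range (fun k => ⌊((k + 1 : ℕ) : ℝ) * γ + a⌋ - ⌊(k : ℝ) * γ + a⌋)]
      at htel
    simp only [Nat.cast_add, Nat.cast_one, ← hy, hsum, Nat.cast_zero, zero_mul, zero_add,
      Int.floor_eq_zero_iff.2 ⟨ha₀, ha₁⟩, sub_zero] at htel
    exact htel.symm
  refine ⟨_, ⟨(γ, a), rfl⟩, funext fun i => ?_⟩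
  rw [hy i, wordOfPattern, ← floor_mul_add_eq hj i.2 ha₀ ha₁ hn,
    ← floor_mul_add_eq hj i.2.le ha₀ ha₁ hn]
  push_cast
  rfl

end Sturmian

/-- there are at most `j(j+1)` Sturmian words of length `j` and weight `n`. -/
theorem stmt_6 (j : ℕ) (hj : 1 ≤ j) (n : ℤ) :
    {y : Fin j → ℤ | (∃ γ : ℝ, IsSturmianWord γ y) ∧ ∑ i, y i = n}.Finite ∧
    Nat.card {y : Fin j → ℤ | (∃ γ : ℝ, IsSturmianWord γ y) ∧ ∑ i, y i = n} ≤ j * (j + 1) := by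
  set patterns := Set.range (signPattern (fun k => floorExcess j n k) (Finset.Icc 1 j))
  have hsub : {y : Fin j → ℤ | (∃ γ : ℝ, IsSturmianWord γ y) ∧ ∑ i, y i = n} ⊆
      wordOfPattern j n '' patterns := fun y ⟨⟨γ, hy⟩, hsum⟩ => mem_image_wordOfPattern hj hy hsum
  have hfin : patterns.Finite := finite_range_signPattern _ _
  have hcount : patterns.ncard ≤ ∑ k ∈ Finset.range 3, j.choose k := by
    simpa using ncard_range_signPattern_le_sum_choose (Finset.Icc 1 j) (d := 2)
      (by simp) fun k => floorExcess j n k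
  refine ⟨(hfin.image _).subset hsub, ?_⟩
  rw [Nat.card_coe_set_eq]
  calc _ ≤ (wordOfPattern j n '' patterns).ncard := Set.ncard_le_ncard hsub (hfin.image _)
    _ ≤ patterns.ncard := Set.ncard_image_le hfin
    _ ≤ 1 + j + j.choose 2 := by simpa [Finset.sum_range_succ, add_comm] using hcount
    _ ≤ j * (j + 1) := by
      obtain ⟨m, rfl⟩ := Nat.exists_eq_add_of_le' hj
      have h := (Nat.choose_two_right (m + 1)).trans_le (Nat.div_le_self _ 2)
      rw [Nat.add_sub_cancel] at h
      nlinarith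
end

section
/- Let ℓ ≥ 1 be an integer and let γ, γ' ∈ ℝ satisfy γ' − γ ≥ 2/ℓ. Then no word (y_0, …, y_{ℓ−1}) ∈ ℤ^ℓ is simultaneously a Sturmian word of slope γ and a Sturmian word of slope γ'. -/
theorem IsSturmianWord.exists_sum_eq_floor {γ : ℝ} {n : ℕ} {y : Fin n → ℤ}
    (hy : IsSturmianWord γ y) :
    ∃ a : ℝ, 0 ≤ a ∧ a < 1 ∧ ∑ i, y i = ⌊(n : ℝ) * γ + a⌋ := by
  obtain ⟨a, ha0, ha1, hy⟩ := hy
  refine ⟨a, ha0, ha1, ?_⟩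
  let f : ℕ → ℤ := fun k => ⌊(k : ℝ) * γ + a⌋
  calc ∑ i, y i = ∑ k ∈ Finset.range n, (f (k + 1) - f k) := by
        rw [Finset.sum_range fun k => f (k + 1) - f k]
        exact Finset.sum_congr rfl fun i _ => by simp [f, hy i]
    _ = f n - f 0 := Finset.sum_range_sub f n
    _ = ⌊(n : ℝ) * γ + a⌋ := by simp [f, Int.floor_eq_zero_iff, ha0, ha1]

theorem IsSturmianWord.abs_sum_sub_lt_one {γ : ℝ} {n : ℕ} {y : Fin n → ℤ}
    (hy : IsSturmianWord γ y) :
    |((∑ i, y i : ℤ) : ℝ) - n * γ| < 1 := by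
  obtain ⟨a, ha0, ha1, hsum⟩ := hy.exists_sum_eq_floor
  rw [hsum, abs_sub_lt_iff]
  constructor <;>
    linarith [Int.floor_le ((n : ℝ) * γ + a), Int.lt_floor_add_one ((n : ℝ) * γ + a)]

/-- if `γ' - γ ≥ 2/ℓ` then no word of length `ℓ` is simultaneously a Sturmian
word of slope `γ` and of slope `γ'`. -/
theorem stmt_8 (ℓ : ℕ) (hℓ : 1 ≤ ℓ) (γ γ' : ℝ) (h : 2 / (ℓ : ℝ) ≤ γ' - γ)
    (y : Fin ℓ → ℤ) :
    ¬ (IsSturmianWord γ y ∧ IsSturmianWord γ' y) := by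
  rintro ⟨hγ, hγ'⟩
  have hℓpos : (0 : ℝ) < ℓ := by exact_mod_cast hℓ
  have hgap : 2 ≤ (ℓ : ℝ) * (γ' - γ) := by
    rwa [div_le_iff₀ hℓpos, mul_comm] at h
  obtain ⟨hlt, -⟩ := abs_sub_lt_iff.mp hγ.abs_sum_sub_lt_one
  obtain ⟨-, hgt⟩ := abs_sub_lt_iff.mp hγ'.abs_sum_sub_lt_one
  linarith
end

section
/- Let α > 0 and let [b,c] ⊆ [0,∞) be a closed interval. Let f : (α,∞) → ℝ be a convex function such that for every t ∈ (α,∞) and every subgradient v of f at t, the intercept f(t) − tv lies in [b,c]. Then f is Lipschitz on (α,∞). -/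
open Set

/-
The right derivative `g` of `f` is a subgradient at every point, so all its intercepts
`f t - t g(t)` lie in `[b, c]`. For `α < t ≤ s`, evaluating the support line at `s` in the point `t`
gives `t (g(s) - g(t)) ≤ (f t - t g(t)) - (f s - s g(s)) ≤ c - b`, so the nondecreasing function `g`
has oscillation at most `(c - b) / α`. Bounded subgradients make `f` Lipschitz.
-/

lemma ConvexOn.add_rightDeriv_mul_sub_le {S : Set ℝ} {f : ℝ → ℝ} {x y : ℝ}
    (hfc : ConvexOn ℝ S f) (hx : x ∈ interior S) (hy : y ∈ S) :
    f x + derivWithin f (Ioi x) x * (y - x) ≤ f y := by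
  rcases lt_trichotomy y x with hyx | rfl | hxy
  · have hslope : slope f y x ≤ derivWithin f (Ioi x) x :=
      (hfc.slope_le_leftDeriv_of_mem_interior hy hx hyx).trans
        (hfc.leftDeriv_le_rightDeriv_of_mem_interior hx)
    rw [slope_def_field, div_le_iff₀ (sub_pos.2 hyx)] at hslope
    linarith
  · simp
  · have hslope := hfc.rightDeriv_le_slope_of_mem_interior hx hy hxy
    rw [slope_def_field, le_div_iff₀ (sub_pos.2 hxy)] at hslope
    linarith

lemma lipschitzOnWith_of_abs_subgradient_le {s : Set ℝ} {f g : ℝ → ℝ} {K : NNReal}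
    (hsub : ∀ x ∈ s, ∀ y ∈ s, f x + g x * (y - x) ≤ f y) (hg : ∀ x ∈ s, |g x| ≤ K) :
    LipschitzOnWith K f s := by
  refine LipschitzOnWith.of_dist_le_mul fun x hx y hy => ?_
  rw [Real.dist_eq, Real.dist_eq, abs_le]
  have hxy := neg_abs_le (g x * (y - x))
  have hyx := neg_abs_le (g y * (x - y))
  rw [abs_mul, abs_sub_comm] at hxy
  rw [abs_mul] at hyx
  have hKx := mul_le_mul_of_nonneg_right (hg x hx) (abs_nonneg (x - y))
  have hKy := mul_le_mul_of_nonneg_right (hg y hy) (abs_nonneg (x - y))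
  constructor <;> linarith [hsub x hx y hy, hsub y hy x hx]

lemma sub_le_div_of_intercepts_mem_Icc {f : ℝ → ℝ} {α b c t s v w : ℝ} (hα : 0 < α)
    (ht : α < t) (hvw : v ≤ w) (hsupp : f s + w * (t - s) ≤ f t)
    (hIt : f t - t * v ∈ Icc b c) (hIs : f s - s * w ∈ Icc b c) :
    w - v ≤ (c - b) / α := by
  have hgap : t * (w - v) ≤ c - b := by linarith [hIt.2, hIs.1]
  rw [le_div_iff₀ hα]
  linarith [mul_le_mul_of_nonneg_right ht.le (sub_nonneg.2 hvw)]

theorem stmt_9_general (α : ℝ) (hα : 0 < α) (b c : ℝ)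
    (f : ℝ → ℝ) (hconv : ConvexOn ℝ (Set.Ioi α) f)
    (hint : ∀ t ∈ Set.Ioi α, ∀ v : ℝ,
      (∀ s ∈ Set.Ioi α, f t + v * (s - t) ≤ f s) →
      f t - t * v ∈ Set.Icc b c) :
    ∃ K : NNReal, LipschitzOnWith K f (Set.Ioi α) := by
  set g : ℝ → ℝ := fun t => derivWithin f (Ioi t) t
  have hsub : ∀ t ∈ Ioi α, ∀ s ∈ Ioi α, f t + g t * (s - t) ≤ f s := fun t ht s hs =>
    hconv.add_rightDeriv_mul_sub_le (by rwa [interior_Ioi]) hs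
  have hmono : MonotoneOn g (Ioi α) := by
    simpa only [interior_Ioi] using hconv.monotoneOn_rightDeriv
  have hosc : ∀ t ∈ Ioi α, ∀ s ∈ Ioi α, t ≤ s → g s - g t ≤ (c - b) / α :=
    fun t ht s hs hts => sub_le_div_of_intercepts_mem_Icc hα ht (hmono ht hs hts)
      (hsub s hs t ht) (hint t ht _ (hsub t ht)) (hint s hs _ (hsub s hs))
  have ht₀ : α + 1 ∈ Ioi α := lt_add_one α
  have hbound : ∀ t ∈ Ioi α, |g t| ≤ |g (α + 1)| + (c - b) / α := by
    intro t ht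
    have hdist : |g t - g (α + 1)| ≤ (c - b) / α := by
      rcases le_total t (α + 1) with h | h
      · rw [abs_sub_comm, abs_of_nonneg (sub_nonneg.2 (hmono ht ht₀ h))]
        exact hosc t ht _ ht₀ h
      · rw [abs_of_nonneg (sub_nonneg.2 (hmono ht₀ ht h))]
        exact hosc _ ht₀ t ht h
    linarith [abs_sub_abs_le_abs_sub (g t) (g (α + 1))]
  exact ⟨_, lipschitzOnWith_of_abs_subgradient_le hsub fun t ht =>
    (hbound t ht).trans (Real.le_coe_toNNReal _)⟩

/-- a convex function on `(α,∞)` whose support-line intercepts all lie in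
`[b,c] ⊆ [0,∞)` is Lipschitz on `(α,∞)`. -/
theorem stmt_9 (α : ℝ) (hα : 0 < α) (b c : ℝ) (hb : 0 ≤ b) (hbc : b ≤ c)
    (f : ℝ → ℝ) (hconv : ConvexOn ℝ (Set.Ioi α) f)
    (hint : ∀ t ∈ Set.Ioi α, ∀ v : ℝ,
      (∀ s ∈ Set.Ioi α, f t + v * (s - t) ≤ f s) →
      f t - t * v ∈ Set.Icc b c) :
    ∃ K : NNReal, LipschitzOnWith K f (Set.Ioi α) :=
  stmt_9_general α hα b c f hconv hint
end

section
/- Let α > 0 and let (z_j)_{j≥1} be a sequence of real numbers in (α,∞). Define g : [0,∞) → ℝ by g(s) = Σ_{j : z_j ≤ s} α/(2^j z_j²) and f(t) = 3 + ∫_0^t g(s) ds. Then for every t ∈ (α,∞), f(t) − t·g(t) ≥ 1. -/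
/-! `g` is a superposition of the steps `c_j 1[z_j ≤ s]`, and integrating termwise
gives `t g(t) - ∫_0^t g = Σ_{z_j ≤ t} c_j z_j = Σ_{z_j ≤ t} (α / z_j) 2^{-j} ≤ 1`. -/

open scoped Interval
open MeasureTheory Set

/-- `g(s) = Σ_{j ≥ 1, z_j ≤ s} α/(2^j z_j²)`. -/
noncomputable def gfun (α : ℝ) (z : ℕ → ℝ) (s : ℝ) : ℝ :=
  ∑' j : ℕ, if 1 ≤ j ∧ z j ≤ s then α / (2 ^ j * (z j) ^ 2) else 0

/-- `f(t) = 3 + ∫_0^t g(s) ds`. -/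
noncomputable def ffun (α : ℝ) (z : ℕ → ℝ) (t : ℝ) : ℝ :=
  3 + ∫ s in (0 : ℝ)..t, gfun α z s

lemma intervalIntegrable_ite_le_const (z c a b : ℝ) :
    IntervalIntegrable (fun s => if z ≤ s then c else 0) volume a b := by
  refine (intervalIntegrable_const (c := c)).mono_fun ?_ (.of_forall fun s => ?_)
  · exact (Measurable.ite measurableSet_Ici measurable_const measurable_const).aestronglyMeasurable
  · dsimp only
    split_ifs <;> simp

lemma integral_ite_le_const_of_left (z c b : ℝ) :
    ∫ s in z..b, (if z ≤ s then c else 0) = c * (max b z - z) := by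
  rcases le_or_gt z b with hzb | hbz
  · rw [max_eq_left hzb, intervalIntegral.integral_congr (g := fun _ => c),
      intervalIntegral.integral_const, smul_eq_mul, mul_comm]
    intro s hs
    rw [uIcc_of_le hzb] at hs
    simp [hs.1]
  · rw [max_eq_right hbz.le, sub_self, mul_zero, intervalIntegral.integral_symm,
      intervalIntegral.integral_of_le hbz.le, integral_Ioc_eq_integral_Ioo,
      setIntegral_eq_zero_of_forall_eq_zero, neg_zero]
    intro s hs
    simp [hs.2]

lemma integral_ite_le_const (z c a b : ℝ) :
    ∫ s in a..b, (if z ≤ s then c else 0) = c * (max b z - max a z) := by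
  rw [← intervalIntegral.integral_interval_sub_left (intervalIntegrable_ite_le_const z c z b)
    (intervalIntegrable_ite_le_const z c z a), integral_ite_le_const_of_left,
    integral_ite_le_const_of_left]
  ring

section StepFunction

variable {ι : Type*} {c : ι → ℝ} (z : ι → ℝ)

lemma Summable.ite_le (hc : Summable c) (s : ℝ) :
    Summable fun j => if z j ≤ s then c j else 0 :=
  hc.abs.of_norm_bounded fun j => by split_ifs <;> simp

lemma hasSum_integral_tsum_ite_le [Countable ι] (hc : Summable c) (a b : ℝ) :
    HasSum (fun j => c j * (max b (z j) - max a (z j)))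
      (∫ s in a..b, ∑' j, if z j ≤ s then c j else 0) := by
  have hdom := intervalIntegral.hasSum_integral_of_dominated_convergence
    (F := fun j s => if z j ≤ s then c j else 0) (fun j _ => |c j|)
    (fun j => (intervalIntegrable_ite_le_const (z j) (c j) a b).def'.aestronglyMeasurable)
    (fun j => .of_forall fun s _ => by split_ifs <;> simp)
    (.of_forall fun _ _ => hc.abs) intervalIntegrable_const
    (.of_forall fun s _ => (hc.ite_le z s).hasSum)
  simpa only [integral_ite_le_const] using hdom

end StepFunction

lemma mul_ite_le_sub_mul_max_sub_max_le {w z : ℝ} (hw : 0 ≤ w) (hz : 0 ≤ z) (t : ℝ) :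
    t * (if z ≤ t then w else 0) - w * (max t z - max 0 z) ≤ w * z := by
  split_ifs with hzt
  · rw [max_eq_left hzt, max_eq_right hz]
    linarith
  · rw [max_eq_right (not_le.1 hzt).le, max_eq_right hz]
    simpa using mul_nonneg hw hz

noncomputable def stepWeight (α : ℝ) (z : ℕ → ℝ) (j : ℕ) : ℝ :=
  if 1 ≤ j then α / (2 ^ j * z j ^ 2) else 0

lemma gfun_eq_tsum (α : ℝ) (z : ℕ → ℝ) (s : ℝ) :
    gfun α z s = ∑' j, if z j ≤ s then stepWeight α z j else 0 := by
  refine tsum_congr fun j => ?_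
  by_cases hj : 1 ≤ j <;> simp [stepWeight, hj]

section Weights

variable {α : ℝ} {z : ℕ → ℝ}

lemma stepWeight_nonneg (hα : 0 < α) (j : ℕ) : 0 ≤ stepWeight α z j := by
  unfold stepWeight
  split_ifs
  · positivity
  · rfl

lemma stepWeight_mul_le (hα : 0 < α) (hz : ∀ j : ℕ, 1 ≤ j → α < z j) (j : ℕ) :
    stepWeight α z j * z j ≤ (1 / 2) ^ j := by
  unfold stepWeight
  split_ifs with hj
  · have hzj := hz j hj
    have hz0 : 0 < z j := hα.trans hzj
    rw [div_mul_eq_mul_div, div_le_iff₀ (by positivity),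
      show (1 / 2 : ℝ) ^ j * (2 ^ j * z j ^ 2) = z j * z j by
        rw [← mul_assoc, ← mul_pow]; norm_num; ring]
    exact mul_le_mul_of_nonneg_right hzj.le hz0.le
  · simp

lemma summable_stepWeight (hα : 0 < α) (hz : ∀ j : ℕ, 1 ≤ j → α < z j) :
    Summable (stepWeight α z) := by
  refine (summable_geometric_two.div_const α).of_nonneg_of_le (stepWeight_nonneg hα)
    fun j => ?_
  rw [le_div_iff₀ hα]
  by_cases hj : 1 ≤ j
  · calc stepWeight α z j * α ≤ stepWeight α z j * z j :=
          mul_le_mul_of_nonneg_left (hz j hj).le (stepWeight_nonneg hα j)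
      _ ≤ (1 / 2) ^ j := stepWeight_mul_le hα hz j
  · simp [stepWeight, hj]

lemma stepWeight_term_le (hα : 0 < α) (hz : ∀ j : ℕ, 1 ≤ j → α < z j) (t : ℝ) (j : ℕ) :
    t * (if z j ≤ t then stepWeight α z j else 0)
      - stepWeight α z j * (max t (z j) - max 0 (z j)) ≤ (1 / 2) ^ j := by
  by_cases hj : 1 ≤ j
  · exact (mul_ite_le_sub_mul_max_sub_max_le (stepWeight_nonneg hα j)
      (hα.trans (hz j hj)).le t).trans (stepWeight_mul_le hα hz j)
  · simp [stepWeight, hj]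

end Weights

theorem stmt_11_general (α : ℝ) (hα : 0 < α) (z : ℕ → ℝ) (hz : ∀ j : ℕ, 1 ≤ j → α < z j)
    (t : ℝ) :
    1 ≤ ffun α z t - t * gfun α z t := by
  have hw := summable_stepWeight hα hz
  have hdiff := ((hw.ite_le z t).hasSum.mul_left t).sub (hasSum_integral_tsum_ite_le z hw 0 t)
  have hle := hasSum_le (stepWeight_term_le hα hz t) hdiff hasSum_geometric_two
  simp only [ffun, gfun_eq_tsum] at hle ⊢
  linarith

/-- for all `t ∈ (α,∞)`, `f(t) − t·g(t) ≥ 1`. -/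
theorem stmt_11 (α : ℝ) (hα : 0 < α) (z : ℕ → ℝ) (hz : ∀ j : ℕ, 1 ≤ j → α < z j)
    (t : ℝ) (ht : α < t) :
    1 ≤ ffun α z t - t * gfun α z t :=
  stmt_11_general α hα z hz t
end

section
/- Let α > 0 and let (z_j)_{j≥1} be a sequence of real numbers in (α,∞). Define g : [0,∞) → ℝ by g(s) = Σ_{j : z_j ≤ s} α/(2^j z_j²) and f(t) = 3 + ∫_0^t g(s) ds. Then f is convex on (α,∞), and f is differentiable at a point t ∈ (α,∞) if and only if t ∉ {z_j : j ≥ 1}. -/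
/-!
Since `g` is monotone, the slopes of `u ↦ ∫_0^u g` are bracketed by values of `g`, which makes
`f` convex; moreover `f` has left derivative `g(t⁻)` and right derivative `g(t⁺)` at every `t`,
so `f` is differentiable at `t` exactly when `g` is continuous at `t`. The series defining `g`
converges uniformly (its `j`-th term is at most `α⁻¹ 2⁻ʲ` because `z_j > α`) and each term is
locally constant off `z_j`, so `g` is continuous off `{z_j}`; at `z_j` it jumps by at least
`α / (2^j z_j²) > 0`.
-/

open Set Filter MeasureTheory Topology

theorem continuousAt_tsum {ι β F : Type*} [TopologicalSpace β] [NormedAddCommGroup F]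
    [CompleteSpace F] {f : ι → β → F} {u : ι → ℝ} {x : β} (hu : Summable u)
    (hfu : ∀ n y, ‖f n y‖ ≤ u n) (hf : ∀ n, ContinuousAt (f n) x) :
    ContinuousAt (fun y => ∑' n, f n y) x := by
  refine continuousAt_of_locally_uniform_approx_of_continuousAt fun v hv => ?_
  obtain ⟨N, hN⟩ := (tendstoUniformly_tsum hu hfu v hv).exists
  exact ⟨univ, univ_mem, _, tendsto_finsetSum N fun n _ => hf n, fun y _ => hN y⟩

namespace Monotone

variable {g : ℝ → ℝ}

theorem convexOn_intervalIntegral (hg : Monotone g) (a : ℝ) :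
    ConvexOn ℝ univ (fun t => ∫ s in a..t, g s) := by
  have hint : ∀ b c, IntervalIntegrable g volume b c := fun _ _ => hg.intervalIntegrable
  refine convexOn_of_slope_mono_adjacent convex_univ fun {x y z} _ _ hxy hyz => ?_
  rw [intervalIntegral.integral_interval_sub_left (hint a y) (hint a x),
    intervalIntegral.integral_interval_sub_left (hint a z) (hint a y)]
  have left : ∫ s in x..y, g s ≤ (y - x) * g y := by
    simpa using intervalIntegral.integral_mono_on hxy.le (hint x y) intervalIntegrable_const
      fun s hs => hg hs.2
  have right : (z - y) * g y ≤ ∫ s in y..z, g s := by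
    simpa using intervalIntegral.integral_mono_on hyz.le intervalIntegrable_const (hint y z)
      fun s hs => hg hs.1
  calc (∫ s in x..y, g s) / (y - x) ≤ g y := (div_le_iff₀' (sub_pos.2 hxy)).2 left
    _ ≤ (∫ s in y..z, g s) / (z - y) := (le_div_iff₀' (sub_pos.2 hyz)).2 right

theorem hasDerivWithinAt_intervalIntegral_Iic (hg : Monotone g) (a t : ℝ) :
    HasDerivWithinAt (fun u => ∫ s in a..u, g s) (Function.leftLim g t) (Iic t) t := by
  have hae : 𝓝[≤] t ⊓ ae volume ≤ 𝓝[<] t :=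
    calc 𝓝[≤] t ⊓ ae volume ≤ 𝓝[≤] t ⊓ 𝓟 {t}ᶜ :=
          inf_le_inf_left _ (le_principal_iff.2 (compl_mem_ae_iff.2 (measure_singleton t)))
      _ = 𝓝[<] t := by rw [← nhdsWithin_inter', ← sdiff_eq, Iic_sdiff_right]
  exact intervalIntegral.integral_hasDerivWithinAt_of_tendsto_ae_right hg.intervalIntegrable
    hg.measurable.stronglyMeasurable.stronglyMeasurableAtFilter
    ((hg.tendsto_leftLim t).mono_left hae)

theorem hasDerivWithinAt_intervalIntegral_Ici (hg : Monotone g) (a t : ℝ) :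
    HasDerivWithinAt (fun u => ∫ s in a..u, g s) (Function.rightLim g t) (Ici t) t :=
  intervalIntegral.integral_hasDerivWithinAt_of_tendsto_ae_right hg.intervalIntegrable
    hg.measurable.stronglyMeasurable.stronglyMeasurableAtFilter
    ((hg.tendsto_rightLim t).mono_left inf_le_left)

theorem differentiableAt_intervalIntegral_iff (hg : Monotone g) (a t : ℝ) :
    DifferentiableAt ℝ (fun u => ∫ s in a..u, g s) t ↔ ContinuousAt g t := by
  refine ⟨fun hd => ?_, fun hc => ?_⟩
  · have hL := (uniqueDiffWithinAt_Iic t).eq_deriv _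
      (hg.hasDerivWithinAt_intervalIntegral_Iic a t) hd.hasDerivAt.hasDerivWithinAt
    have hR := (uniqueDiffWithinAt_Ici t).eq_deriv _
      (hg.hasDerivWithinAt_intervalIntegral_Ici a t) hd.hasDerivAt.hasDerivWithinAt
    exact hg.continuousAt_iff_leftLim_eq_rightLim.2 (hL.trans hR.symm)
  · exact (intervalIntegral.integral_hasDerivAt_right hg.intervalIntegrable
      hg.measurable.stronglyMeasurable.stronglyMeasurableAtFilter hc).differentiableAt

end Monotone

-- `gfun α z s` unfolds to `∑' j, gfunTerm α z j s`, which the proofs below use silently.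
noncomputable def gfunTerm (α : ℝ) (z : ℕ → ℝ) (j : ℕ) (s : ℝ) : ℝ :=
  if 1 ≤ j ∧ z j ≤ s then α / (2 ^ j * (z j) ^ 2) else 0

section gfun

variable {α : ℝ} {z : ℕ → ℝ}

theorem gfunTerm_nonneg (hα : 0 ≤ α) (j : ℕ) (s : ℝ) : 0 ≤ gfunTerm α z j s := by
  unfold gfunTerm
  split_ifs <;> positivity

theorem gfunTerm_le (hα : 0 < α) (hz : ∀ j : ℕ, 1 ≤ j → α < z j) (j : ℕ) (s : ℝ) :
    gfunTerm α z j s ≤ α⁻¹ * (1 / 2) ^ j := by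
  unfold gfunTerm
  split_ifs with h
  · have hαz : α ^ 2 ≤ z j ^ 2 := pow_le_pow_left₀ hα.le (hz j h.1).le 2
    calc α / (2 ^ j * z j ^ 2) ≤ α / (2 ^ j * α ^ 2) := by gcongr
      _ = α⁻¹ * (1 / 2) ^ j := by field_simp; rw [← mul_pow]; norm_num
  · positivity

theorem summable_gfunTerm (hα : 0 < α) (hz : ∀ j : ℕ, 1 ≤ j → α < z j) (s : ℝ) :
    Summable (fun j => gfunTerm α z j s) :=
  Summable.of_nonneg_of_le (gfunTerm_nonneg hα.le · s) (gfunTerm_le hα hz · s)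
    (summable_geometric_two.mul_left _)

theorem monotone_gfunTerm (hα : 0 ≤ α) (j : ℕ) : Monotone (gfunTerm α z j) := by
  intro s s' hss'
  by_cases h : 1 ≤ j ∧ z j ≤ s
  · rw [gfunTerm, gfunTerm, if_pos h, if_pos ⟨h.1, h.2.trans hss'⟩]
  · rw [gfunTerm, if_neg h]
    exact gfunTerm_nonneg hα j s'

theorem monotone_gfun (hα : 0 < α) (hz : ∀ j : ℕ, 1 ≤ j → α < z j) : Monotone (gfun α z) :=
  fun _ _ hss' => Summable.tsum_le_tsum (fun j => monotone_gfunTerm hα.le j hss')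
    (summable_gfunTerm hα hz _) (summable_gfunTerm hα hz _)

theorem continuousAt_gfunTerm {j : ℕ} {t : ℝ} (hjt : 1 ≤ j → z j ≠ t) :
    ContinuousAt (gfunTerm α z j) t := by
  have hcond : ∀ᶠ s in 𝓝 t, (1 ≤ j ∧ z j ≤ s ↔ 1 ≤ j ∧ z j ≤ t) := by
    by_cases hj : 1 ≤ j
    · rcases (hjt hj).lt_or_gt with h | h
      · filter_upwards [Ioi_mem_nhds h] with s (hs : z j < s)
        simp [hj, hs.le, h.le]
      · filter_upwards [Iio_mem_nhds h] with s (hs : s < z j)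
        simp [hs.not_ge, h.not_ge]
    · exact Eventually.of_forall fun s => by simp [hj]
  refine (continuousAt_const (y := gfunTerm α z j t)).congr ?_
  filter_upwards [hcond] with s hs
  simp only [gfunTerm, hs]

theorem continuousAt_gfun (hα : 0 < α) (hz : ∀ j : ℕ, 1 ≤ j → α < z j) {t : ℝ}
    (ht : ¬ ∃ j : ℕ, 1 ≤ j ∧ z j = t) : ContinuousAt (gfun α z) t :=
  continuousAt_tsum (summable_geometric_two.mul_left α⁻¹)
    (fun j s => (Real.norm_of_nonneg (gfunTerm_nonneg hα.le j s)).trans_le (gfunTerm_le hα hz j s))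
    fun _ => continuousAt_gfunTerm fun hj hzt => ht ⟨_, hj, hzt⟩

theorem gfun_add_le_gfun (hα : 0 < α) (hz : ∀ j : ℕ, 1 ≤ j → α < z j) {j : ℕ} (hj : 1 ≤ j)
    {u : ℝ} (hu : u < z j) : gfun α z u + α / (2 ^ j * (z j) ^ 2) ≤ gfun α z (z j) := by
  set c := α / (2 ^ j * (z j) ^ 2)
  have hterm : ∀ i, gfunTerm α z i u + (if i = j then c else 0) ≤ gfunTerm α z i (z j) := by
    intro i
    split_ifs with hij
    · subst hij
      simp [gfunTerm, hj, hu.not_ge, c]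
    · simpa using monotone_gfunTerm hα.le i hu.le
  calc gfun α z u + c = ∑' i, (gfunTerm α z i u + if i = j then c else 0) := by
        rw [Summable.tsum_add (summable_gfunTerm hα hz u) (hasSum_ite_eq j c).summable,
          tsum_ite_eq]
        rfl
    _ ≤ gfun α z (z j) :=
        Summable.tsum_le_tsum hterm ((summable_gfunTerm hα hz u).add (hasSum_ite_eq j c).summable)
          (summable_gfunTerm hα hz _)

theorem not_continuousAt_gfun (hα : 0 < α) (hz : ∀ j : ℕ, 1 ≤ j → α < z j) {j : ℕ}
    (hj : 1 ≤ j) : ¬ ContinuousAt (gfun α z) (z j) := by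
  intro hcont
  have hc : 0 < α / (2 ^ j * (z j) ^ 2) := by
    have := hα.trans (hz j hj)
    positivity
  have hle : gfun α z (z j) ≤ gfun α z (z j) - α / (2 ^ j * (z j) ^ 2) :=
    le_of_tendsto (hcont.tendsto.mono_left (nhdsWithin_le_nhds (s := Iio (z j)))) <| by
      filter_upwards [self_mem_nhdsWithin] with u hu
      linarith [gfun_add_le_gfun hα hz hj (show u < z j from hu)]
  linarith

theorem continuousAt_gfun_iff (hα : 0 < α) (hz : ∀ j : ℕ, 1 ≤ j → α < z j) (t : ℝ) :
    ContinuousAt (gfun α z) t ↔ ¬ ∃ j : ℕ, 1 ≤ j ∧ z j = t := by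
  refine ⟨?_, continuousAt_gfun hα hz⟩
  rintro hcont ⟨j, hj, rfl⟩
  exact not_continuousAt_gfun hα hz hj hcont

end gfun

/-- `f` is convex on `(α,∞)`, and `f` is differentiable at `t ∈ (α,∞)`
exactly when `t` is not one of the `z_j`. -/
theorem stmt_12 (α : ℝ) (hα : 0 < α) (z : ℕ → ℝ) (hz : ∀ j : ℕ, 1 ≤ j → α < z j) :
    ConvexOn ℝ (Set.Ioi α) (ffun α z) ∧
    ∀ t ∈ Set.Ioi α,
      (DifferentiableAt ℝ (ffun α z) t ↔ ¬ ∃ j : ℕ, 1 ≤ j ∧ z j = t) := by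
  have hg := monotone_gfun hα hz
  have hf : ffun α z = fun t => 3 + ∫ s in (0 : ℝ)..t, gfun α z s := rfl
  refine ⟨?_, fun t _ => ?_⟩
  · rw [hf]
    exact (convexOn_const 3 (convex_Ioi α)).add
      ((hg.convexOn_intervalIntegral 0).subset (subset_univ _) (convex_Ioi α))
  · rw [hf, differentiableAt_const_add_iff, hg.differentiableAt_intervalIntegral_iff,
      continuousAt_gfun_iff hα hz]
end

section
/- Let A be a finite alphabet and let L be a factorial language over A, i.e., a set of finite words over A closed under taking subwords. Define the pinning space Ω ⊆ A^ℤ × {0,1}^ℤ by: (u,v) ∈ Ω if and only if (1) whenever i < j and v_{i+1} = … = v_j = 0, the word u_i u_{i+1} … u_j belongs to L, and (2) whenever i < j and v_i = v_j = 1, the word u_i u_{i+1} … u_j does not belong to L. Then for any u ∈ A^ℤ and any v, v' with (u,v) ∈ Ω and (u,v') ∈ Ω, if v_k = v'_k = 1 for some k ∈ ℤ, then v_m = v'_m for all m ≥ k. -/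
/-!
Induction on `m ≥ k`, with both sequences agreeing on `[k, m)`. Suppose `v` pins `m` but `v'`
does not, and let `i ∈ [k, m)` be the last pin of `v'` before `m`. Since `v'` vanishes on
`(i, m]`, the word `u_i … u_m` lies in `L`; but `v i = v' i` and `v m` are both pins, so it
does not. By symmetry `v m` and `v' m` agree.
-/

/-- The finite word `u_i u_{i+1} … u_j` of a two-sided sequence `u`. -/
def wordOf {A : Type*} (u : ℤ → A) (i j : ℤ) : List A :=
  (List.range (j - i + 1).toNat).map (fun k => u (i + (k : ℕ)))

lemma exists_last_true_of_le {w : ℤ → Bool} {k : ℤ} (hk : w k = true) :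
    ∀ m, k ≤ m → ∃ i ∈ Set.Icc k m, w i = true ∧ ∀ j ∈ Set.Ioc i m, w j = false := by
  refine Int.leInduction ⟨k, ⟨le_rfl, le_rfl⟩, hk, fun j hj => absurd hj.2 hj.1.not_ge⟩ ?_
  intro m hkm ⟨i, ⟨hki, him⟩, hi, hzero⟩
  cases hm : w (m + 1) with
  | true => exact ⟨m + 1, ⟨by omega, le_rfl⟩, hm, fun j hj => absurd hj.2 hj.1.not_ge⟩
  | false =>
    refine ⟨i, ⟨hki, by omega⟩, hi, fun j ⟨hij, hjm⟩ => ?_⟩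
    obtain hjm | rfl := Int.le_add_one_iff.mp hjm
    · exact hzero j ⟨hij, hjm⟩
    · exact hm

lemma eq_true_of_eqOn_Ico_of_eq_true {A : Type*} {L : Set (List A)} {u : ℤ → A}
    {v w : ℤ → Bool}
    (hw : ∀ i j : ℤ, i < j → (∀ k : ℤ, i < k → k ≤ j → w k = false) → wordOf u i j ∈ L)
    (hv : ∀ i j : ℤ, i < j → v i = true → v j = true → wordOf u i j ∉ L)
    {k m : ℤ} (hk : w k = true) (hkm : k ≤ m) (hvw : Set.EqOn v w (Set.Ico k m))
    (hm : v m = true) : w m = true := by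
  by_contra hwm
  rw [Bool.not_eq_true] at hwm
  obtain ⟨i, ⟨hki, him⟩, hi, hzero⟩ := exists_last_true_of_le hk m hkm
  have him : i < m := him.lt_of_ne (ne_of_apply_ne w (by rw [hi, hwm]; decide))
  exact hv i m him (hvw ⟨hki, him⟩ ▸ hi) hm (hw i m him fun j hij hjm => hzero j ⟨hij, hjm⟩)

theorem stmt_16_general {A : Type*} (L : Set (List A))
    (u : ℤ → A) (v v' : ℤ → Bool)
    (h1 : ∀ i j : ℤ, i < j → (∀ k : ℤ, i < k → k ≤ j → v k = false) →
      wordOf u i j ∈ L)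
    (h2 : ∀ i j : ℤ, i < j → v i = true → v j = true → wordOf u i j ∉ L)
    (h1' : ∀ i j : ℤ, i < j → (∀ k : ℤ, i < k → k ≤ j → v' k = false) →
      wordOf u i j ∈ L)
    (h2' : ∀ i j : ℤ, i < j → v' i = true → v' j = true → wordOf u i j ∉ L)
    (k : ℤ) (hk : v k = true) (hk' : v' k = true) :
    ∀ m : ℤ, k ≤ m → v m = v' m := by
  suffices h : ∀ m, k ≤ m → Set.EqOn v v' (Set.Icc k m) from fun m hkm => h m hkm ⟨hkm, le_rfl⟩
  refine Int.leInduction ?_ fun m hkm hvv' => ?_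
  · rintro i ⟨hki, hik⟩
    rw [le_antisymm hik hki, hk, hk']
  · have hvv' : Set.EqOn v v' (Set.Ico k (m + 1)) := fun i ⟨hki, him⟩ => hvv' ⟨hki, by omega⟩
    rintro i ⟨hki, him⟩
    obtain him | rfl := Int.le_add_one_iff.mp him
    · exact hvv' ⟨hki, by omega⟩
    · exact Bool.eq_iff_iff.mpr
        ⟨eq_true_of_eqOn_Ico_of_eq_true h1' h2 hk' (by omega) hvv',
          eq_true_of_eqOn_Ico_of_eq_true h1 h2' hk (by omega) hvv'.symm⟩

/-- in the pinning space of a factorial language, two pinning sequences for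
the same `u` that both have a pin (a `1`) at position `k` agree at all positions `m ≥ k`.
Here pins are encoded by `true` and `0`'s by `false`. -/
theorem stmt_16 {A : Type*} [Fintype A] (L : Set (List A))
    (hfac : ∀ w ∈ L, ∀ w' : List A, w' <:+: w → w' ∈ L)
    (u : ℤ → A) (v v' : ℤ → Bool)
    (h1 : ∀ i j : ℤ, i < j → (∀ k : ℤ, i < k → k ≤ j → v k = false) →
      wordOf u i j ∈ L)
    (h2 : ∀ i j : ℤ, i < j → v i = true → v j = true → wordOf u i j ∉ L)
    (h1' : ∀ i j : ℤ, i < j → (∀ k : ℤ, i < k → k ≤ j → v' k = false) →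
      wordOf u i j ∈ L)
    (h2' : ∀ i j : ℤ, i < j → v' i = true → v' j = true → wordOf u i j ∉ L)
    (k : ℤ) (hk : v k = true) (hk' : v' k = true) :
    ∀ m : ℤ, k ≤ m → v m = v' m :=
  stmt_16_general L u v v' h1 h2 h1' h2' k hk hk'
end

section
/- Let m ≥ 0, 0 ≤ b ≤ c, L > 0, and let S be a nonempty closed subset of [b,c] × [−L,L]^m ⊆ ℝ^{m+1}. Let Z = ⋃_{γ ∈ S} Z_γ ⊆ (ℕ × ℤ^{m+1})^ℤ. Suppose a word u = ((x_i, y^0_i, …, y^m_i))_{i=0}^{j−1} of length j ≥ 1 occurs as a factor of some point of Z, and set n_k = y^k_0 + … + y^k_{j−1} for k = 0, …, m. Then there exists γ = (γ_0, …, γ_m) ∈ S such that γ_k ∈ ((n_k − 1)/j, (n_k + 1)/j) for every k = 0, …, m, the word (x_0, …, x_{j−1}) belongs to L_j(X_{e^{γ_0}}), and for each k = 0, …, m the word (y^k_0, …, y^k_{j−1}) occurs as a factor of some point of Y_{γ_k}. -/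
/-- The two-sided β-shift. -/
def betaShift (β : ℝ) : Set (ℤ → ℕ) :=
  {x | ∀ i : ℤ, ∀ n : ℕ, 0 < n →
    (fun k : Fin n => ((x (i + (k : ℕ)) : ℤ))) ∈ betaLang β n}

/-- `Z_γ = X_{e^{γ₀}} × Y_{γ₀} × ⋯ × Y_{γ_m}`, as a subset of `(ℕ × ℤ^{m+1})^ℤ`. -/
noncomputable def Zset (m : ℕ) (γ : Fin (m + 1) → ℝ) :
    Set (ℤ → ℕ × (Fin (m + 1) → ℤ)) :=
  {z | (fun i => (z i).1) ∈ betaShift (Real.exp (γ 0)) ∧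
       ∀ k : Fin (m + 1), (fun i => (z i).2 k) ∈ sturmSystem (γ k)}

/-!
Each Sturmian coordinate of a point of `Z_γ` lies in the closure of the orbit of `y^γ`, and a window sum is a
continuous function into the discrete space `ℤ`, so its value is attained on a shift of `y^γ`.
There the sum telescopes to `⌊x + jγ⌋ - ⌊x⌋`, which is within distance `1` of `jγ`. The
β-coordinate word lies in `L_j` by the definition of the two-sided β-shift.
-/

open Finset

lemma abs_floor_add_sub_floor_sub_lt_one (x y : ℝ) :
    |((⌊x + y⌋ - ⌊x⌋ : ℤ) : ℝ) - y| < 1 := by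
  have h₁ := Int.floor_le (x + y)
  have h₂ := Int.lt_floor_add_one (x + y)
  have h₃ := Int.floor_le x
  have h₄ := Int.lt_floor_add_one x
  push_cast
  rw [abs_sub_lt_iff]
  constructor <;> linarith

lemma sum_sturmSeq_window (γ : ℝ) (q : ℤ) (j : ℕ) :
    ∑ i : Fin j, sturmSeq γ (q + (i : ℕ)) = ⌊(q : ℝ) * γ + j * γ⌋ - ⌊(q : ℝ) * γ⌋ := by
  have hstep : ∀ i : ℕ, sturmSeq γ (q + i) = ⌊(q : ℝ) * γ + (i + 1 : ℕ) * γ⌋ -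
      ⌊(q : ℝ) * γ + (i : ℕ) * γ⌋ := by
    intro i
    unfold sturmSeq
    congr 2 <;> push_cast <;> ring
  rw [Fin.sum_univ_eq_sum_range (fun i : ℕ => sturmSeq γ (q + i)), sum_congr rfl fun i _ => hstep i,
    sum_range_sub (fun i : ℕ => ⌊(q : ℝ) * γ + (i : ℕ) * γ⌋)]
  simp

lemma exists_window_sum_eq_of_mem_sturmSystem {γ : ℝ} {w : ℤ → ℤ} (hw : w ∈ sturmSystem γ)
    (l : ℤ) (j : ℕ) :
    ∃ q : ℤ, ∑ i : Fin j, w (l + (i : ℕ)) = ∑ i : Fin j, sturmSeq γ (q + (i : ℕ)) := by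
  let windowSum : (ℤ → ℤ) → ℤ := fun z => ∑ i : Fin j, z (l + (i : ℕ))
  have hcont : Continuous windowSum := continuous_finsetSum _ fun i _ => continuous_apply _
  have hmem := image_closure_subset_closure_image hcont (Set.mem_image_of_mem windowSum hw)
  rw [(isClosed_discrete _).closure_eq] at hmem
  obtain ⟨_, ⟨n, rfl⟩, hn⟩ := hmem
  exact ⟨l + n, hn.symm.trans (sum_congr rfl fun i _ =>
    congrArg (sturmSeq γ) (add_right_comm _ _ _))⟩

lemma abs_window_sum_sub_lt_one_of_mem_sturmSystem {γ : ℝ} {w : ℤ → ℤ}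
    (hw : w ∈ sturmSystem γ) (l : ℤ) (j : ℕ) :
    |((∑ i : Fin j, w (l + (i : ℕ)) : ℤ) : ℝ) - j * γ| < 1 := by
  obtain ⟨q, hq⟩ := exists_window_sum_eq_of_mem_sturmSystem hw l j
  rw [hq, sum_sturmSeq_window]
  exact abs_floor_add_sub_floor_sub_lt_one _ _

theorem stmt_19_general (m : ℕ)
    (S : Set (Fin (m + 1) → ℝ))
    (j : ℕ) (hj : 1 ≤ j) (u : Fin j → ℕ × (Fin (m + 1) → ℤ))
    (hu : ∃ z ∈ ⋃ γ ∈ S, Zset m γ, ∃ l : ℤ, ∀ i : Fin j, u i = z (l + (i : ℕ))) :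
    ∃ γ ∈ S,
      (∀ k : Fin (m + 1),
        ((∑ i, (u i).2 k : ℤ) - 1 : ℝ) / j < γ k ∧
        γ k < ((∑ i, (u i).2 k : ℤ) + 1 : ℝ) / j) ∧
      (fun i : Fin j => (((u i).1 : ℤ))) ∈ betaLang (Real.exp (γ 0)) j ∧
      (∀ k : Fin (m + 1), ∃ w ∈ sturmSystem (γ k), ∃ l : ℤ,
        ∀ i : Fin j, (u i).2 k = w (l + (i : ℕ))) := by
  obtain ⟨z, hz, l, hul⟩ := hu
  obtain rfl : u = fun i : Fin j => z (l + (i : ℕ)) := funext hul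
  obtain ⟨γ, hγS, hzβ, hzSturm⟩ := Set.mem_iUnion₂.mp hz
  have hjpos : (0 : ℝ) < j := by exact_mod_cast hj
  refine ⟨γ, hγS, fun k => ?_, hzβ l j hj, fun k => ⟨_, hzSturm k, l, fun i => rfl⟩⟩
  have hclose := abs_sub_lt_iff.mp (abs_window_sum_sub_lt_one_of_mem_sturmSystem (hzSturm k) l j)
  rw [div_lt_iff₀ hjpos, lt_div_iff₀ hjpos]
  constructor <;> linarith

/-- if a word `u` of length `j ≥ 1` occurs as a factor of a point of
`Z = ⋃_{γ ∈ S} Z_γ`, with Sturmian weights `n_k`, then there is `γ ∈ S` with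
`γ_k ∈ ((n_k−1)/j, (n_k+1)/j)` for all `k`, the β-coordinate word in `L_j(X_{e^{γ₀}})`,
and each Sturmian coordinate word a factor of a point of `Y_{γ_k}`. -/
theorem stmt_19 (m : ℕ) (b c L : ℝ) (hb : 0 ≤ b) (hbc : b ≤ c) (hL : 0 < L)
    (S : Set (Fin (m + 1) → ℝ)) (hSne : S.Nonempty) (hScl : IsClosed S)
    (hSsub : ∀ γ ∈ S, γ 0 ∈ Set.Icc b c ∧
      ∀ k : Fin (m + 1), k ≠ 0 → γ k ∈ Set.Icc (-L) L)
    (j : ℕ) (hj : 1 ≤ j) (u : Fin j → ℕ × (Fin (m + 1) → ℤ))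
    (hu : ∃ z ∈ ⋃ γ ∈ S, Zset m γ, ∃ l : ℤ, ∀ i : Fin j, u i = z (l + (i : ℕ))) :
    ∃ γ ∈ S,
      (∀ k : Fin (m + 1),
        ((∑ i, (u i).2 k : ℤ) - 1 : ℝ) / j < γ k ∧
        γ k < ((∑ i, (u i).2 k : ℤ) + 1 : ℝ) / j) ∧
      (fun i : Fin j => (((u i).1 : ℤ))) ∈ betaLang (Real.exp (γ 0)) j ∧
      (∀ k : Fin (m + 1), ∃ w ∈ sturmSystem (γ k), ∃ l : ℤ,
        ∀ i : Fin j, (u i).2 k = w (l + (i : ℕ))) :=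
  stmt_19_general m S j hj u hu
end
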